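/- arXiv:0902.2003 — 6 statements merged into one kernel-verified Lean document; each statement's English description precedes it below -/
import Mathlib

section
/- There exists a constant C > 0 such that for every s ∈ ℂ one has |1/Γ(s)| ≤ C · (1 + |s|)^(1/2 − Re s) · exp(arg(s)·Im(s) + Re(s)), where Γ is the complex Gamma function, 1/Γ denotes its entire reciprocal (with value 0 at the poles of Γ), arg(s) is the principal argument taken in (−π, π], and the power (1+|s|)^(1/2 − Re s) is the real power of the positive real number 1+|s|. -/
/-!
On `1/2 ≤ re s`, Euler's limit `Γ(s) = lim n^s n! / ∏_{k ≤ n} (s + k)` expresses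
`log ‖Γ(s)‖` through `∑_{k ≤ n} log ‖s + k‖`. The trapezoidal rule compares this sum
with `∫ log ‖s + x‖ dx = Re((s + x) log (s + x) - (s + x))`; the integrand has derivative
`Re (s + x)⁻¹`, which is `(re s + k)⁻²`-Lipschitz on `[k, k + 1]`, so the errors sum to at
most `2`. With Stirling's formula for `n!` this gives the two-sided bound
`|log ‖Γ(s)‖ - Re((s - 1/2) log s - s) - log (2π) / 2| ≤ 2`.
For `re s ≤ 1/2` the reflection formula `1/Γ(s) = sin(πs) Γ(1 - s) / π` reduces to an upper
bound for `‖Γ(1 - s)‖`. The factor `exp (π |im s|)` coming from the sine is absorbed because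
`π + arg (1 - s) - arg s` is the angle under which `[0, 1]` is seen from `s` (for `im s > 0`),
and this angle is at most `1 / im s`.
-/

open Complex Filter Set Finset
open scoped Real Nat NNReal Topology ComplexConjugate

theorem Complex.norm_sin_le_exp_abs_im (z : ℂ) : ‖sin z‖ ≤ Real.exp |z.im| := by
  have h₁ : ‖exp (-z * I)‖ ≤ Real.exp |z.im| := by
    rw [norm_exp]; exact Real.exp_le_exp.mpr (by simpa using le_abs_self z.im)
  have h₂ : ‖exp (z * I)‖ ≤ Real.exp |z.im| := by
    rw [norm_exp]; exact Real.exp_le_exp.mpr (by simpa using neg_le_abs z.im)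
  calc ‖sin z‖ = ‖exp (-z * I) - exp (z * I)‖ / 2 := by simp [sin]
    _ ≤ (‖exp (-z * I)‖ + ‖exp (z * I)‖) / 2 := by gcongr; exact norm_sub_le _ _
    _ ≤ Real.exp |z.im| := by linarith

theorem Real.lipschitzWith_arctan : LipschitzWith 1 Real.arctan :=
  lipschitzWith_of_nnnorm_deriv_le Real.differentiable_arctan fun x => by
    rw [← NNReal.coe_le_coe, coe_nnnorm, Real.deriv_arctan, NNReal.coe_one, Real.norm_eq_abs,
      abs_of_pos (by positivity)]
    exact div_le_one_of_le₀ (by nlinarith [sq_nonneg x]) (by positivity)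

theorem Complex.arg_eq_pi_div_two_sub_arctan {z : ℂ} (hz : 0 < z.im) :
    arg z = π / 2 - Real.arctan (z.re / z.im) := by
  have h₀ : 0 < arg z := (arg_nonneg_iff.mpr hz.le).lt_of_ne' fun h => by
    simp [arg_eq_zero_iff, hz.ne'] at h
  have h₁ : arg z < π := arg_lt_pi_iff.mpr (Or.inr hz.ne')
  have h : Real.tan (π / 2 - arg z) = z.re / z.im := by
    rw [Real.tan_pi_div_two_sub, tan_arg, inv_div]
  rw [← h, Real.arctan_tan (by linarith) (by linarith)]
  ring

theorem Complex.arg_conj_of_im_ne_zero {z : ℂ} (hz : z.im ≠ 0) : arg (conj z) = -arg z := by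
  rw [arg_conj, if_neg fun h => hz (arg_eq_pi_iff.mp h).2]

theorem im_mul_pi_add_arg_one_sub_sub_arg_le_one {s : ℂ} (hs : 0 < s.im) :
    s.im * (π + arg (1 - s) - arg s) ≤ 1 := by
  have h₁ : arg (1 - s) = -(π / 2 - Real.arctan ((1 - s.re) / s.im)) := by
    have him : 0 < (1 - conj s).im := by simpa using hs
    have h := arg_eq_pi_div_two_sub_arctan him
    simp only [sub_re, one_re, conj_re, sub_im, one_im, conj_im, zero_sub, neg_neg] at h
    rw [← h, ← arg_conj_of_im_ne_zero him.ne', map_sub, map_one, conj_conj]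
  have h₂ : Real.arctan ((1 - s.re) / s.im) - Real.arctan (-s.re / s.im) ≤ 1 / s.im := by
    have := Real.lipschitzWith_arctan.dist_le_mul ((1 - s.re) / s.im) (-s.re / s.im)
    rw [Real.dist_eq, Real.dist_eq, ← sub_div, sub_neg_eq_add, sub_add_cancel,
      abs_of_pos (one_div_pos.mpr hs), NNReal.coe_one, one_mul] at this
    exact (le_abs_self _).trans this
  rw [h₁, arg_eq_pi_div_two_sub_arctan hs]
  rw [neg_div, Real.arctan_neg] at h₂
  calc s.im * (π + -(π / 2 - Real.arctan ((1 - s.re) / s.im))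
        - (π / 2 - Real.arctan (s.re / s.im)))
      = s.im * (Real.arctan ((1 - s.re) / s.im) - -Real.arctan (s.re / s.im)) := by ring
    _ ≤ s.im * (1 / s.im) := by gcongr
    _ = 1 := by field_simp

theorem abs_im_mul_pi_add_im_mul_arg_sub_le_one (s : ℂ) :
    |s.im| * π + s.im * (arg (1 - s) - arg s) ≤ 1 := by
  rcases lt_trichotomy s.im 0 with hs | hs | hs
  · have h := im_mul_pi_add_arg_one_sub_sub_arg_le_one (s := conj s) (by simpa using hs)
    have h₁ : arg (1 - conj s) = -arg (1 - s) := by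
      rw [← arg_conj_of_im_ne_zero (by simpa using hs.ne), map_sub, map_one]
    rw [h₁, arg_conj_of_im_ne_zero hs.ne, conj_im] at h
    rw [abs_of_neg hs]
    linarith
  · simp [hs]
  · have h := im_mul_pi_add_arg_one_sub_sub_arg_le_one hs
    rw [abs_of_pos hs]
    linarith

open intervalIntegral in
theorem abs_trapezoid_sub_integral_le {f f' : ℝ → ℝ} {K : ℝ≥0} {a : ℝ}
    (hf : ∀ x ∈ Icc a (a + 1), HasDerivAt f (f' x) x)
    (hf' : LipschitzOnWith K f' (Icc a (a + 1))) :
    |(f a + f (a + 1)) / 2 - ∫ x in a..a + 1, f x| ≤ K / 4 := by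
  set c := a + 1 / 2 with hc_def
  have hI : uIcc a (a + 1) = Icc a (a + 1) := uIcc_of_le (by linarith)
  have hc : c ∈ Icc a (a + 1) := ⟨by linarith, by linarith⟩
  have hf'_cont := hI ▸ hf'.continuousOn
  have hlin : Continuous fun x : ℝ => x - c := continuous_id.sub continuous_const
  -- integrate by parts against `x - c`, whose integral over the interval vanishes
  have hparts : ∫ x in a..a + 1, (x - c) * (f' x - f' c) =
      (f a + f (a + 1)) / 2 - ∫ x in a..a + 1, f x := by
    have hibp := integral_mul_deriv_eq_deriv_mul (u := fun x => x - c) (u' := fun _ => 1)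
      (fun x _ => (hasDerivAt_id x).sub_const c) (fun x hx => hf x (hI ▸ hx))
      intervalIntegrable_const hf'_cont.intervalIntegrable
    have hmean : ∫ x in a..a + 1, (x - c) * f' c = 0 := by
      rw [integral_mul_const, integral_sub intervalIntegrable_id intervalIntegrable_const,
        integral_id, integral_const, hc_def]
      simp only [smul_eq_mul]; ring
    calc ∫ x in a..a + 1, (x - c) * (f' x - f' c)
        = (∫ x in a..a + 1, (x - c) * f' x) - ∫ x in a..a + 1, (x - c) * f' c := by
          rw [← integral_sub (hlin.intervalIntegrable _ _ |>.mul_continuousOn hf'_cont)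
            (hlin.intervalIntegrable _ _ |>.mul_const _)]
          simp only [mul_sub]
      _ = _ := by
          rw [hibp, hmean, hc_def]
          simp only [one_mul]
          ring
  rw [← hparts]
  have hbound : ∀ x ∈ uIoc a (a + 1), ‖(x - c) * (f' x - f' c)‖ ≤ K / 4 := by
    intro x hx
    rw [uIoc_of_le (by linarith)] at hx
    have hxc : |x - c| ≤ 1 / 2 := abs_le.mpr ⟨by linarith [hx.1], by linarith [hx.2]⟩
    have hlip : |f' x - f' c| ≤ K * |x - c| := by
      simpa [Real.dist_eq] using hf'.dist_le_mul x (Ioc_subset_Icc_self hx) c hc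
    rw [norm_mul, Real.norm_eq_abs, Real.norm_eq_abs]
    calc |x - c| * |f' x - f' c| ≤ |x - c| * (K * |x - c|) := by gcongr
      _ ≤ 1 / 2 * (K * (1 / 2)) := by gcongr
      _ = K / 4 := by ring
  simpa using norm_integral_le_of_norm_le_const hbound

open intervalIntegral in
theorem abs_sum_range_sub_integral_le {f f' : ℝ → ℝ} {K : ℕ → ℝ≥0} {n : ℕ}
    (hf : ∀ x ∈ Icc (0 : ℝ) n, HasDerivAt f (f' x) x)
    (hf' : ∀ k < n, LipschitzOnWith (K k) f' (Icc (k : ℝ) (k + 1))) :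
    |∑ k ∈ range (n + 1), f k - (∫ x in (0 : ℝ)..n, f x) - (f 0 + f n) / 2| ≤
      ∑ k ∈ range n, (K k : ℝ) / 4 := by
  have hsub : ∀ k < n, Icc (k : ℝ) (k + 1) ⊆ Icc 0 n := fun k hk =>
    Icc_subset_Icc (Nat.cast_nonneg k) (by exact_mod_cast hk)
  have hint : ∫ x in (0 : ℝ)..n, f x = ∑ k ∈ range n, ∫ x in (k : ℝ)..k + 1, f x := by
    have h := sum_integral_adjacent_intervals (a := fun k : ℕ => (k : ℝ)) (f := f)
      (μ := MeasureTheory.volume) (n := n) fun k hk => ?_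
    · push_cast at h; exact h.symm
    · refine ContinuousOn.intervalIntegrable fun x hx => ?_
      rw [Set.uIcc_of_le (by push_cast; linarith)] at hx
      push_cast at hx
      exact (hf x (hsub k hk hx)).continuousAt.continuousWithinAt
  have hsum : ∑ k ∈ range (n + 1), f k - (f 0 + f n) / 2 =
      ∑ k ∈ range n, (f k + f (k + 1)) / 2 := by
    have h₁ := sum_range_succ (fun k : ℕ => f k) n
    have h₂ := sum_range_succ' (fun k : ℕ => f k) n
    push_cast at h₁ h₂
    rw [← sum_div, sum_add_distrib]
    linarith
  rw [sub_right_comm, hsum, hint, ← sum_sub_distrib]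
  refine (abs_sum_le_sum_abs _ _).trans (sum_le_sum fun k hk => ?_)
  exact abs_trapezoid_sub_integral_le (fun x hx => hf x (hsub k (Finset.mem_range.mp hk) hx))
    (hf' k (Finset.mem_range.mp hk))

theorem sum_range_inv_succ_sq_le_two (n : ℕ) :
    ∑ k ∈ range n, ((k + 1 : ℝ) ^ 2)⁻¹ ≤ 2 := by
  have h := sum_Ioo_inv_sq_le (α := ℝ) 0 (n + 1)
  rw [← Finset.Ico_add_one_left_eq_Ioo, sum_Ico_eq_sum_range] at h
  simpa [add_comm] using h

theorem hasDerivAt_log_norm_add {s : ℂ} {x : ℝ} (hx : 0 < s.re + x) :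
    HasDerivAt (fun y : ℝ => Real.log ‖s + y‖) ((s + x)⁻¹).re x := by
  have hslit : s + x ∈ slitPlane := Or.inl (by simpa using hx)
  have h := (((hasDerivAt_id (x : ℂ)).const_add s).clog hslit).real_of_complex
  simpa [log_re, div_eq_inv_mul] using h

theorem hasDerivAt_re_add_mul_log_add_sub {s : ℂ} {x : ℝ} (hx : 0 < s.re + x) :
    HasDerivAt (fun y : ℝ => ((s + y) * log (s + y) - (s + y)).re) (Real.log ‖s + x‖) x := by
  have hslit : s + x ∈ slitPlane := Or.inl (by simpa using hx)
  have hid := (hasDerivAt_id (x : ℂ)).const_add s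
  refine ((hid.mul (hid.clog hslit)).sub hid).real_of_complex.congr_deriv ?_
  simp [slitPlane_ne_zero hslit, log_re]

theorem lipschitzOnWith_re_inv_add {s : ℂ} {a : ℝ} (ha : 0 < s.re + a) :
    LipschitzOnWith (Real.toNNReal ((s.re + a) ^ 2)⁻¹) (fun x : ℝ => ((s + x)⁻¹).re)
      (Ici a) := by
  refine LipschitzOnWith.of_dist_le_mul fun x hx y hy => ?_
  have hnorm : ∀ z ∈ Ici a, s.re + a ≤ ‖s + z‖ := fun z hz =>
    (by simpa using add_le_add_left (show a ≤ z from hz) s.re : s.re + a ≤ (s + z).re).trans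
      (re_le_norm _)
  have hx₀ : s + x ≠ 0 := norm_pos_iff.mp (ha.trans_le (hnorm x hx))
  have hy₀ : s + y ≠ 0 := norm_pos_iff.mp (ha.trans_le (hnorm y hy))
  rw [Real.coe_toNNReal _ (by positivity), Real.dist_eq, Real.dist_eq, ← sub_re]
  calc |((s + x)⁻¹ - (s + y)⁻¹).re| ≤ ‖(s + x)⁻¹ - (s + y)⁻¹‖ := abs_re_le_norm _
    _ = |x - y| / (‖s + x‖ * ‖s + y‖) := by
      rw [inv_sub_inv hx₀ hy₀, norm_div, norm_mul]
      simp [← ofReal_sub, norm_sub_rev]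
    _ ≤ |x - y| / ((s.re + a) * (s.re + a)) := by
      gcongr
      exacts [hnorm x hx, hnorm y hy]
    _ = ((s.re + a) ^ 2)⁻¹ * |x - y| := by ring

theorem abs_sum_log_norm_add_sub_le {s : ℂ} (hs : 1 / 2 ≤ s.re) (n : ℕ) :
    |∑ k ∈ range (n + 1), Real.log ‖s + k‖
        - (((s + n) * log (s + n) - (s + n)).re - (s * log s - s).re)
        - (Real.log ‖s‖ + Real.log ‖s + n‖) / 2| ≤ 2 := by
  have hpos : ∀ x : ℝ, 0 ≤ x → 0 < s.re + x := fun x hx => by linarith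
  have hint : ∫ x in (0 : ℝ)..n, Real.log ‖s + x‖ =
      ((s + n) * log (s + n) - (s + n)).re - (s * log s - s).re := by
    rw [intervalIntegral.integral_eq_sub_of_hasDerivAt
      (f := fun y : ℝ => ((s + y) * log (s + y) - (s + y)).re)]
    · simp
    · intro x hx
      rw [Set.uIcc_of_le n.cast_nonneg] at hx
      exact hasDerivAt_re_add_mul_log_add_sub (hpos x hx.1)
    · refine ContinuousOn.intervalIntegrable fun x hx => ?_
      rw [Set.uIcc_of_le n.cast_nonneg] at hx
      exact (hasDerivAt_log_norm_add (hpos x hx.1)).continuousAt.continuousWithinAt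
  have h := abs_sum_range_sub_integral_le (f := fun y : ℝ => Real.log ‖s + y‖)
    (K := fun k => Real.toNNReal ((s.re + k) ^ 2)⁻¹) (n := n)
    (fun x hx => hasDerivAt_log_norm_add (hpos x hx.1))
    (fun k _ => (lipschitzOnWith_re_inv_add (hpos k k.cast_nonneg)).mono Icc_subset_Ici_self)
  rw [hint] at h
  simp only [ofReal_zero, add_zero, ofReal_natCast] at h
  refine h.trans ((sum_le_sum fun k _ => ?_).trans (sum_range_inv_succ_sq_le_two n))
  rw [Real.coe_toNNReal _ (by positivity), div_eq_mul_inv, ← mul_inv,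
    inv_le_inv₀ (by positivity) (by positivity)]
  nlinarith [(k.cast_nonneg : (0 : ℝ) ≤ k)]

theorem log_norm_GammaSeq {s : ℂ} (hs : ∀ m : ℕ, s ≠ -m) {n : ℕ} (hn : n ≠ 0) :
    Real.log ‖GammaSeq s n‖ =
      s.re * Real.log n + Real.log n ! - ∑ k ∈ range (n + 1), Real.log ‖s + k‖ := by
  have hk : ∀ k ∈ range (n + 1), ‖s + k‖ ≠ 0 := fun k _ =>
    norm_ne_zero_iff.mpr fun h => hs k (eq_neg_of_add_eq_zero_left h)
  rw [GammaSeq, norm_div, norm_mul, norm_prod, norm_natCast_cpow_of_pos (Nat.pos_of_ne_zero hn),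
    norm_natCast, Real.log_div (by positivity) (prod_ne_zero_iff.mpr hk),
    Real.log_mul (by positivity) (by positivity), Real.log_rpow (by positivity),
    Real.log_prod hk]

theorem tendsto_log_factorial_sub_add_half_mul_log_add :
    Tendsto (fun n : ℕ => Real.log n ! - (n + 1 / 2) * Real.log n + n) atTop
      (𝓝 (Real.log (2 * π) / 2)) := by
  have hlim := ((Real.continuousAt_log (by positivity)).tendsto.comp
    Stirling.tendsto_stirlingSeq_sqrt_pi).add_const (Real.log 2 / 2)
  rw [Real.log_sqrt Real.pi_pos.le, ← add_div, ← Real.log_mul Real.pi_ne_zero two_ne_zero,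
    mul_comm] at hlim
  refine hlim.congr' ?_
  filter_upwards [eventually_ne_atTop 0] with n hn
  have hn' : (n : ℝ) ≠ 0 := Nat.cast_ne_zero.mpr hn
  simp only [Function.comp_apply, Stirling.log_stirlingSeq_formula,
    Real.log_mul two_ne_zero hn', Real.log_div hn' (Real.exp_ne_zero 1), Real.log_exp]
  ring

theorem tendsto_add_add_half_mul_log_one_add_div (s : ℂ) :
    Tendsto (fun n : ℕ => (s + n + 1 / 2) * log (1 + s / n)) atTop (𝓝 s) := by
  have hmain : Tendsto (fun n : ℕ => (n : ℂ) * log (1 + s / n)) atTop (𝓝 s) := by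
    refine tendsto_nat_mul_log_one_add_of_tendsto (tendsto_const_nhds.congr' ?_)
    filter_upwards [eventually_ne_atTop 0] with n hn
    rw [mul_div_cancel₀ _ (Nat.cast_ne_zero.mpr hn)]
  have hlog : Tendsto (fun n : ℕ => log (1 + s / n)) atTop (𝓝 0) := by
    have h : Tendsto (fun n : ℕ => 1 + s / n) atTop (𝓝 1) := by
      simpa using (tendsto_const_div_atTop_nhds_zero_nat s).const_add 1
    simpa [Function.comp_def] using
      (continuousAt_clog (by simp : (1 : ℂ) ∈ slitPlane)).tendsto.comp h
  have h := hmain.add (hlog.const_mul (s + 1 / 2))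
  rw [mul_zero, add_zero] at h
  exact h.congr fun n => by ring

theorem tendsto_stirling_remainder (s : ℂ) :
    Tendsto (fun n : ℕ => s.re * Real.log n + Real.log n !
        - ((s + n) * log (s + n) - (s + n)).re - Real.log ‖s + n‖ / 2) atTop
      (𝓝 (Real.log (2 * π) / 2)) := by
  have h := tendsto_log_factorial_sub_add_half_mul_log_add.add
    (tendsto_const_nhds.sub (continuous_re.tendsto s |>.comp
      (tendsto_add_add_half_mul_log_one_add_div s)) : Tendsto _ atTop (𝓝 (s.re - s.re)))
  rw [sub_self, add_zero] at h
  refine h.congr' ?_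
  filter_upwards [eventually_gt_atTop ⌈‖s‖⌉₊] with n hn
  have hsn' : ‖s‖ < n := Nat.lt_of_ceil_lt hn
  have hn₀ : (0 : ℝ) < n := (norm_nonneg s).trans_lt hsn'
  have hsn : s + n = (n : ℝ) * (1 + s / n) := by
    rw [ofReal_natCast]; field_simp [(Nat.cast_ne_zero.mpr (Nat.cast_pos.mp hn₀).ne')]; ring
  have h1 : 1 + s / n ≠ 0 := fun h => by
    have h' := congrArg norm (eq_neg_of_add_eq_zero_left (hsn.trans (by rw [h, mul_zero])))
    simp only [norm_neg, norm_natCast] at h'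
    linarith
  have hlog : log (s + n) = Real.log n + log (1 + s / n) := by rw [hsn, log_ofReal_mul hn₀ h1]
  simp only [Function.comp_apply, ← log_re, hlog]
  simp only [mul_re, add_re, add_im, sub_re, ofReal_re, ofReal_im, natCast_re, natCast_im,
    div_ofNat_re, div_ofNat_im, one_re, one_im]
  ring

theorem abs_log_norm_Gamma_sub_le {s : ℂ} (hs : 1 / 2 ≤ s.re) :
    |Real.log ‖Gamma s‖ - (((s - 1 / 2) * log s - s).re + Real.log (2 * π) / 2)| ≤ 2 := by
  have hs₀ : 0 < s.re := by linarith
  have hpoles : ∀ m : ℕ, s ≠ -m := fun m h => by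
    have := congrArg re h
    simp only [neg_re, natCast_re] at this
    linarith [(m.cast_nonneg : (0 : ℝ) ≤ m)]
  have hΓ : ‖Gamma s‖ ≠ 0 := norm_ne_zero_iff.mpr (Gamma_ne_zero_of_re_pos hs₀)
  have hlim := ((Real.continuousAt_log hΓ).tendsto.comp ((continuous_norm.tendsto _).comp
    (GammaSeq_tendsto_Gamma s))).sub (tendsto_stirling_remainder s)
  have hle : ∀ᶠ n : ℕ in atTop, |Real.log ‖GammaSeq s n‖
        - (s.re * Real.log n + Real.log n ! - ((s + n) * log (s + n) - (s + n)).re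
          - Real.log ‖s + n‖ / 2)
        - ((s - 1 / 2) * log s - s).re| ≤ 2 := by
    filter_upwards [eventually_ne_atTop 0] with n hn
    rw [log_norm_GammaSeq hpoles hn, ← abs_neg]
    convert abs_sum_log_norm_add_sub_le hs n using 2
    simp only [mul_re, sub_re, sub_im, log_re, log_im, div_ofNat_re, div_ofNat_im, one_re, one_im]
    ring
  have h := le_of_tendsto ((hlim.sub_const (((s - 1 / 2) * log s - s).re)).abs) hle
  rwa [sub_sub, add_comm (Real.log (2 * π) / 2)] at h

theorem re_sub_half_mul_log_sub (s : ℂ) :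
    ((s - 1 / 2) * log s - s).re = (s.re - 1 / 2) * Real.log ‖s‖ - s.arg * s.im - s.re := by
  simp only [sub_re, mul_re, sub_im, log_re, log_im, div_ofNat_re, div_ofNat_im, one_re, one_im]
  ring

theorem exp_le_norm_Gamma {s : ℂ} (hs : 1 / 2 ≤ s.re) :
    Real.exp (((s - 1 / 2) * log s - s).re - 2) ≤ ‖Gamma s‖ := by
  have hΓ : 0 < ‖Gamma s‖ := norm_pos_iff.mpr (Gamma_ne_zero_of_re_pos (by linarith))
  have h2π : 0 ≤ Real.log (2 * π) := Real.log_nonneg (by linarith [Real.pi_gt_three])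
  rw [← Real.exp_log hΓ]
  exact Real.exp_le_exp.mpr (by linarith [(abs_le.mp (abs_log_norm_Gamma_sub_le hs)).1])

theorem norm_Gamma_le {s : ℂ} (hs : 1 / 2 ≤ s.re) :
    ‖Gamma s‖ ≤ π * Real.exp (((s - 1 / 2) * log s - s).re + 2) := by
  have hΓ : 0 < ‖Gamma s‖ := norm_pos_iff.mpr (Gamma_ne_zero_of_re_pos (by linarith))
  have h2π : Real.log (2 * π) ≤ 2 * Real.log π := by
    rw [← Real.log_rpow Real.pi_pos, Real.rpow_two]
    exact Real.log_le_log (by positivity) (by nlinarith [Real.pi_gt_three])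
  rw [← Real.exp_log hΓ, ← Real.exp_log Real.pi_pos, ← Real.exp_add]
  exact Real.exp_le_exp.mpr (by linarith [(abs_le.mp (abs_log_norm_Gamma_sub_le hs)).2])

theorem mul_log_one_add_sub_log_le_one {c r : ℝ} (hr : 0 < r) (hcr : c ≤ r) :
    c * (Real.log (1 + r) - Real.log r) ≤ 1 := by
  have h₀ : 0 ≤ Real.log (1 + r) - Real.log r :=
    sub_nonneg.mpr (Real.log_le_log hr (by linarith))
  have h₁ : Real.log (1 + r) - Real.log r ≤ 1 / r := by
    rw [← Real.log_div (by positivity) hr.ne']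
    calc Real.log ((1 + r) / r) ≤ (1 + r) / r - 1 := Real.log_le_sub_one_of_pos (by positivity)
      _ = 1 / r := by field_simp; ring
  calc c * (Real.log (1 + r) - Real.log r) ≤ r * (1 / r) := by nlinarith
    _ = 1 := by field_simp

theorem norm_inv_Gamma_le_of_half_le_re {s : ℂ} (hs : 1 / 2 ≤ s.re) :
    ‖(Gamma s)⁻¹‖ ≤
      Real.exp (3 + (1 / 2 - s.re) * Real.log (1 + ‖s‖) + (s.arg * s.im + s.re)) := by
  have hlog := mul_log_one_add_sub_log_le_one (c := s.re - 1 / 2) (r := ‖s‖)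
    (by linarith [re_le_norm s]) (by linarith [re_le_norm s])
  calc ‖(Gamma s)⁻¹‖ ≤ (Real.exp (((s - 1 / 2) * log s - s).re - 2))⁻¹ := by
        rw [norm_inv]; exact inv_anti₀ (Real.exp_pos _) (exp_le_norm_Gamma hs)
    _ ≤ _ := by
        rw [← Real.exp_neg, Real.exp_le_exp, re_sub_half_mul_log_sub]
        linarith

theorem inv_Gamma_eq_sin_mul_Gamma_one_sub {s : ℂ} (hs : Gamma (1 - s) ≠ 0) :
    (Gamma s)⁻¹ = sin (π * s) * Gamma (1 - s) / π := by
  have hrefl := Gamma_mul_Gamma_one_sub s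
  by_cases hsin : sin (π * s) = 0
  · rw [hsin, div_zero, mul_eq_zero] at hrefl
    simp [hsin, hrefl.resolve_right hs]
  · have hπ : (π : ℂ) ≠ 0 := ofReal_ne_zero.mpr Real.pi_ne_zero
    have hΓ : Gamma s ≠ 0 := fun h => by
      rw [h, zero_mul] at hrefl
      exact div_ne_zero hπ hsin hrefl.symm
    rw [eq_div_iff hπ, ← mul_right_inj' hΓ, ← mul_assoc, mul_inv_cancel₀ hΓ, one_mul,
      mul_left_comm, hrefl]
    field_simp

theorem norm_inv_Gamma_le_of_re_le_half {s : ℂ} (hs : s.re ≤ 1 / 2) :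
    ‖(Gamma s)⁻¹‖ ≤
      Real.exp (3 + (1 / 2 - s.re) * Real.log (1 + ‖s‖) + (s.arg * s.im + s.re)) := by
  have hs' : 1 / 2 ≤ (1 - s).re := by rw [sub_re, one_re]; linarith
  have hlog : Real.log ‖1 - s‖ ≤ Real.log (1 + ‖s‖) :=
    Real.log_le_log (by linarith [re_le_norm (1 - s)])
      ((norm_sub_le _ _).trans_eq (by rw [norm_one]))
  have hangle := abs_im_mul_pi_add_im_mul_arg_sub_le_one s
  rw [inv_Gamma_eq_sin_mul_Gamma_one_sub (Gamma_ne_zero_of_re_pos (by linarith)), norm_div,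
    norm_mul, norm_real, Real.norm_of_nonneg Real.pi_pos.le]
  calc ‖sin (π * s)‖ * ‖Gamma (1 - s)‖ / π
      ≤ Real.exp |(π * s).im|
          * (π * Real.exp ((((1 - s) - 1 / 2) * log (1 - s) - (1 - s)).re + 2)) / π := by
        gcongr
        exacts [norm_sin_le_exp_abs_im _, norm_Gamma_le hs']
    _ = Real.exp (|(π * s).im| + ((((1 - s) - 1 / 2) * log (1 - s) - (1 - s)).re + 2)) := by
        rw [mul_div_assoc, mul_div_cancel_left₀ _ Real.pi_pos.ne', ← Real.exp_add]
    _ ≤ _ := by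
        rw [Real.exp_le_exp, re_sub_half_mul_log_sub]
        simp only [im_ofReal_mul, abs_mul, abs_of_pos Real.pi_pos, sub_re, one_re, sub_im, one_im]
        linarith [mul_le_mul_of_nonneg_left hlog (by linarith : 0 ≤ 1 / 2 - s.re)]

/-- There is a constant `C > 0` such that for all `s ∈ ℂ`,
`|1/Γ(s)| ≤ C (1 + |s|)^(1/2 - Re s) exp(arg(s)·Im(s) + Re(s))`, where `1/Γ` is the entire
reciprocal of the complex Gamma function (Mathlib's `Complex.Gamma` vanishes at the poles),
`arg` is the principal argument in `(-π, π]`, and the power is a real power of `1 + |s|`. -/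
theorem gamma_reciprocal_estimate :
    ∃ C : ℝ, 0 < C ∧ ∀ s : ℂ,
      ‖(Complex.Gamma s)⁻¹‖ ≤
        C * (1 + ‖s‖) ^ ((1 : ℝ) / 2 - s.re) *
          Real.exp (s.arg * s.im + s.re) := by
  refine ⟨Real.exp 3, Real.exp_pos 3, fun s => ?_⟩
  rw [Real.rpow_def_of_pos (by positivity), ← Real.exp_add, ← Real.exp_add,
    mul_comm (Real.log _)]
  rcases le_total (1 / 2) s.re with hs | hs
  · exact norm_inv_Gamma_le_of_half_le_re hs
  · exact norm_inv_Gamma_le_of_re_le_half hs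
end

section
/- Let A_1,…,A_{n_A} be distinct nonzero complex numbers with multiplicities m_1,…,m_{n_A} ≥ 1, n = Σ_j m_j, and let l ∈ ℤ. Then the generalized Vandermonde matrix V_{A,m,l} is invertible. -/
/-!
Reversing the columns of `V` turns the exponent of column `i` into `t + i` with `t = l - (n - 1)`,
and a kernel vector into the coefficient vector `u` of a polynomial `q` of degree `< n`. The rows
belonging to `A_j` say that `∑ᵢ uᵢ P(t + i) A_jⁱ = 0` for every polynomial `P` of degree `< m_j`;
for the falling factorial `P(x) = (x - t)(x - t - 1)⋯(x - t - r + 1)` this sum is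
`A_j^r q⁽ʳ⁾(A_j)`. So each `A_j` is a root of `q` of multiplicity at least `m_j`, and `q = 0`.
-/

open Polynomial

theorem Polynomial.eq_zero_of_degree_lt_of_isRoot_iterate_derivative {K ι : Type*} [Field K]
    [CharZero K] [Fintype ι] {a : ι → K} (ha : Function.Injective a) (m : ι → ℕ) {q : K[X]}
    (hdeg : q.degree < ∑ i, m i) (hroot : ∀ i, ∀ r < m i, (derivative^[r] q).IsRoot (a i)) :
    q = 0 := by
  by_contra hq
  have hdvd : ∀ i, (X - C (a i)) ^ m i ∣ q := by
    intro i
    rw [← le_rootMultiplicity_iff hq]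
    rcases Nat.eq_zero_or_pos (m i) with h0 | hpos
    · omega
    · have := (lt_rootMultiplicity_iff_isRoot_iterate_derivative hq (n := m i - 1)).mpr
        fun r hr => hroot i r (by omega)
      omega
  have hprod : (∏ i, (X - C (a i)) ^ m i) ∣ q :=
    Fintype.prod_dvd_of_coprime (fun _ _ hij => (pairwise_coprime_X_sub_C ha hij).pow) hdvd
  have hprod_deg : (∏ i, (X - C (a i)) ^ m i).degree = ((∑ i, m i : ℕ) : WithBot ℕ) := by
    simp [degree_prod, degree_pow]
  exact (degree_le_of_dvd hprod hq).not_gt (hprod_deg ▸ hdeg)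

theorem Finset.sum_mul_eval_mul_eq_zero_of_natDegree_lt {R ι : Type*} [CommSemiring R]
    (s : Finset ι) (v x w : ι → R) {m : ℕ} (h : ∀ r < m, ∑ k ∈ s, v k * x k ^ r * w k = 0) {P : R[X]}
    (hP : P.natDegree < m) : ∑ k ∈ s, v k * P.eval (x k) * w k = 0 := by
  simp_rw [eval_eq_sum_range' hP, Finset.mul_sum, Finset.sum_mul]
  rw [Finset.sum_comm]
  refine Finset.sum_eq_zero fun r hr => ?_
  calc ∑ k ∈ s, v k * (P.coeff r * x k ^ r) * w k
      = P.coeff r * ∑ k ∈ s, v k * x k ^ r * w k := by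
        rw [Finset.mul_sum]; exact Finset.sum_congr rfl fun k _ => by ring
    _ = 0 := by rw [h r (Finset.mem_range.mp hr), mul_zero]

theorem Polynomial.pow_mul_eval_iterate_derivative_sum_C_mul_X_pow {R ι : Type*} [CommSemiring R]
    (s : Finset ι) (c : ι → R) (e : ι → ℕ) (a : R) (r : ℕ) :
    a ^ r * (derivative^[r] (∑ k ∈ s, C (c k) * X ^ e k)).eval a =
      ∑ k ∈ s, c k * (e k).descFactorial r * a ^ e k := by
  simp only [iterate_derivative_sum, iterate_derivative_C_mul, iterate_derivative_X_pow_eq_C_mul,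
    eval_finsetSum, eval_mul, eval_C, eval_pow, eval_X, Finset.mul_sum]
  refine Finset.sum_congr rfl fun k _ => ?_
  rcases le_or_gt r (e k) with h | h
  · rw [← Nat.add_sub_cancel' h, pow_add, Nat.add_sub_cancel_left]
    ring
  · simp [Nat.descFactorial_eq_zero_iff_lt.mpr h]

namespace Matrix

theorem exists_mul_eq_one_and_mul_eq_one_of_mulVec_eq_zero {K ι κ : Type*} [Field K]
    [Fintype ι] [Fintype κ] [DecidableEq ι] [DecidableEq κ]
    (hcard : Fintype.card ι = Fintype.card κ) (M : Matrix ι κ K)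
    (hM : ∀ v, M *ᵥ v = 0 → v = 0) : ∃ W : Matrix κ ι K, M * W = 1 ∧ W * M = 1 := by
  let e : ι ≃ κ := Fintype.equivOfCardEq hcard
  set N : Matrix ι ι K := M.submatrix id e
  have hN : IsUnit N := by
    refine mulVec_injective_iff_isUnit.mp <|
      (injective_iff_map_eq_zero N.mulVecLin).mpr fun u hu => ?_
    have : u ∘ e.symm = 0 := hM _ (by simpa [N, submatrix_mulVec_equiv] using hu)
    ext i
    simpa using congrFun this (e i)
  have hdet : IsUnit N.det := (isUnit_iff_isUnit_det N).mp hN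
  have hMN : M = N.submatrix id e.symm := by ext; simp [N]
  refine ⟨N⁻¹.submatrix e.symm id, ?_, ?_⟩
  · rw [hMN, submatrix_mul_equiv, mul_nonsing_inv _ hdet, submatrix_id_id]
  · rw [hMN, ← Equiv.coe_refl, submatrix_mul_equiv, nonsing_inv_mul _ hdet]
    exact submatrix_one_equiv e.symm

end Matrix

theorem eq_zero_of_forall_sum_mul_intCast_pow_mul_zpow_eq_zero {K ι : Type*} [Field K]
    [CharZero K] [Fintype ι] {A : ι → K} (hA : Function.Injective A) (hA0 : ∀ j, A j ≠ 0)
    (m : ι → ℕ) {n : ℕ} (hn : n ≤ ∑ j, m j) (t : ℤ) (u : Fin n → K)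
    (hu : ∀ j, ∀ r < m j, ∑ i : Fin n, u i * ((t + i : ℤ) : K) ^ r * A j ^ (t + i : ℤ) = 0) :
    u = 0 := by
  set q : K[X] := ∑ i : Fin n, C (u i) * X ^ (i : ℕ)
  have hroot : ∀ j, ∀ r < m j, (derivative^[r] q).IsRoot (A j) := by
    intro j r hr
    have hmoments : ∀ s < m j, ∑ i : Fin n, u i * ((t + i : ℤ) : K) ^ s * A j ^ (i : ℕ) = 0 := by
      intro s hs
      calc ∑ i : Fin n, u i * ((t + i : ℤ) : K) ^ s * A j ^ (i : ℕ)
          = (A j ^ t)⁻¹ * ∑ i : Fin n, u i * ((t + i : ℤ) : K) ^ s * A j ^ (t + i : ℤ) := by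
            rw [Finset.mul_sum]
            refine Finset.sum_congr rfl fun i _ => ?_
            rw [zpow_add₀ (hA0 j), zpow_natCast]
            field_simp [zpow_ne_zero t (hA0 j)]
        _ = 0 := by rw [hu j s hs, mul_zero]
    have hfalling : ∑ i : Fin n, u i * ((i : ℕ).descFactorial r : K) * A j ^ (i : ℕ) = 0 := by
      have hdeg : ((descPochhammer K r).comp (X - C (t : K))).natDegree < m j := by
        rwa [natDegree_comp, descPochhammer_natDegree, natDegree_X_sub_C, mul_one]
      rw [← Finset.sum_mul_eval_mul_eq_zero_of_natDegree_lt _ u _ _ hmoments hdeg]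
      refine Finset.sum_congr rfl fun i _ => ?_
      rw [eval_comp, eval_sub, eval_X, eval_C, ← descPochhammer_eval_eq_descFactorial]
      push_cast
      ring_nf
    have := pow_mul_eval_iterate_derivative_sum_C_mul_X_pow Finset.univ u (fun i => (i : ℕ)) (A j) r
    rw [hfalling] at this
    exact (mul_eq_zero.mp this).resolve_left (pow_ne_zero _ (hA0 j))
  have hq : q = 0 :=
    eq_zero_of_degree_lt_of_isRoot_iterate_derivative hA m
      ((degree_sum_fin_lt u).trans_le (by exact_mod_cast hn)) hroot
  funext i
  simpa [q, finsetSum_coeff, coeff_C_mul_X_pow, Fin.val_inj] using congrArg (coeff · i) hq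

theorem generalized_vandermonde_invertible_general (nA : ℕ) (A : Fin nA → ℂ)
    (hA : Function.Injective A) (hA0 : ∀ j, A j ≠ 0)
    (m : Fin nA → ℕ)
    (n : ℕ) (hn : n = ∑ j, m j) (l : ℤ)
    (V : Matrix (Σ j : Fin nA, Fin (m j)) (Fin n) ℂ)
    (hV : ∀ (p : Σ j : Fin nA, Fin (m j)) (k : Fin n),
      V p k = ((l - (k : ℕ) : ℤ) : ℂ) ^ (p.2 : ℕ) * A p.1 ^ (l - (k : ℕ) : ℤ)) :
    ∃ W : Matrix (Fin n) (Σ j : Fin nA, Fin (m j)) ℂ, V * W = 1 ∧ W * V = 1 := by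
  have hcard : Fintype.card (Σ j : Fin nA, Fin (m j)) = Fintype.card (Fin n) := by simp [hn]
  refine Matrix.exists_mul_eq_one_and_mul_eq_one_of_mulVec_eq_zero hcard V fun v hv => ?_
  have hrev : v ∘ Fin.rev = 0 := by
    refine eq_zero_of_forall_sum_mul_intCast_pow_mul_zpow_eq_zero hA hA0 m hn.le (l - (n - 1)) _
      fun j r hr => ?_
    have hrow := congrFun hv ⟨j, ⟨r, hr⟩⟩
    rw [Matrix.mulVec, dotProduct, ← Equiv.sum_comp Fin.revPerm, Pi.zero_apply] at hrow
    refine (Finset.sum_congr rfl fun i _ => ?_).trans hrow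
    have hexp : l - ((i.rev : ℕ) : ℤ) = l - (n - 1) + (i : ℕ) := by
      rw [Fin.val_rev]; omega
    rw [hV, Fin.revPerm_apply, hexp, Function.comp_apply]
    ring
  funext k
  simpa using congrFun hrev k.rev

/-- Let `A₁,…,A_{n_A}` be distinct nonzero complex numbers with multiplicities
`m₁,…,m_{n_A} ≥ 1`, `n = Σⱼ mⱼ`, and `l ∈ ℤ`. The generalized Vandermonde matrix `V_{A,m,l}`,
with rows indexed by pairs `(j,r)` (`0 ≤ r < mⱼ`), columns indexed by `k = 0,…,n-1`, and
entries `(l-k)^r · Aⱼ^(l-k)`, is invertible (it has a two-sided inverse). -/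
theorem generalized_vandermonde_invertible (nA : ℕ) (A : Fin nA → ℂ)
    (hA : Function.Injective A) (hA0 : ∀ j, A j ≠ 0)
    (m : Fin nA → ℕ) (hm : ∀ j, 1 ≤ m j)
    (n : ℕ) (hn : n = ∑ j, m j) (l : ℤ)
    (V : Matrix (Σ j : Fin nA, Fin (m j)) (Fin n) ℂ)
    (hV : ∀ (p : Σ j : Fin nA, Fin (m j)) (k : Fin n),
      V p k = ((l - (k : ℕ) : ℤ) : ℂ) ^ (p.2 : ℕ) * A p.1 ^ (l - (k : ℕ) : ℤ)) :
    ∃ W : Matrix (Fin n) (Σ j : Fin nA, Fin (m j)) ℂ, V * W = 1 ∧ W * V = 1 :=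
  generalized_vandermonde_invertible_general nA A hA hA0 m n hn l V hV
end

section
/- Let A_1,…,A_{n_A} be distinct nonzero complex numbers with multiplicities m_1,…,m_{n_A} ≥ 1, n = Σ_j m_j, and l ∈ ℤ. Then the conjugated matrix C = V_{A,m,l}^{−1} · D_{A,m} · V_{A,m,l} (an n×n matrix with rows and columns indexed by k, k' ∈ {0,…,n−1}) is of cyclic form: for every k ∈ {0,…,n−1} and every k' with 1 ≤ k' ≤ n−1, one has C_{k,k'} = 1 if k' = k+1 and C_{k,k'} = 0 otherwise (the entries of the 0-th column being unconstrained). -/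
/-! The matrix `D_{A,m}` maps the Vandermonde column with exponent `e` to the one with exponent
`e + 1` (binomial theorem), so `D V` is `V` with its columns shifted by one; multiplying by `V⁻¹`
leaves the shift matrix in every column but the 0-th. -/

section BinomialShift

open Matrix

variable {K ι : Type*} [Field K] [Fintype ι] [DecidableEq ι] (A : ι → K) (m : ι → ℕ)

/-- The matrix `D_{A,m}`. -/
def binomialBlockMatrix : Matrix (Σ j, Fin (m j)) (Σ j, Fin (m j)) K :=
  fun p q => if p.1 = q.1 ∧ (q.2 : ℕ) ≤ p.2 then ((p.2 : ℕ).choose q.2 : K) * A p.1 else 0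

/-- The column of `V_{A,m,l}` with exponent `e = l - k`. -/
def vandermondeColumn (e : ℤ) : (Σ j, Fin (m j)) → K :=
  fun p => (e : K) ^ (p.2 : ℕ) * A p.1 ^ e

variable {A m}

theorem binomialBlockMatrix_mulVec_vandermondeColumn (hA : ∀ j, A j ≠ 0) (e : ℤ) :
    binomialBlockMatrix A m *ᵥ vandermondeColumn A m e = vandermondeColumn A m (e + 1) := by
  ext ⟨j, r⟩
  have hoff : ∀ j' ≠ j, ∑ r' : Fin (m j'),
      binomialBlockMatrix A m ⟨j, r⟩ ⟨j', r'⟩ * vandermondeColumn A m e ⟨j', r'⟩ = 0 :=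
    fun j' hj' => Finset.sum_eq_zero fun r' _ => by
      simp [binomialBlockMatrix, Ne.symm hj']
  have hrange : (Finset.range (m j)).filter (· ≤ (r : ℕ)) = Finset.range ((r : ℕ) + 1) := by
    ext i; simp only [Finset.mem_filter, Finset.mem_range]; omega
  calc (binomialBlockMatrix A m *ᵥ vandermondeColumn A m e) ⟨j, r⟩
      = ∑ r' : Fin (m j),
          binomialBlockMatrix A m ⟨j, r⟩ ⟨j, r'⟩ * vandermondeColumn A m e ⟨j, r'⟩ := by
        rw [Matrix.mulVec, dotProduct, ← Finset.univ_sigma_univ, Finset.sum_sigma,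
          Finset.sum_eq_single j (fun j' _ hj' => hoff j' hj') (by simp)]
    _ = ∑ i ∈ Finset.range (m j), if i ≤ (r : ℕ) then
          ((r : ℕ).choose i : K) * A j * ((e : K) ^ i * A j ^ e) else 0 := by
        rw [← Fin.sum_univ_eq_sum_range (fun i => if i ≤ (r : ℕ) then
          ((r : ℕ).choose i : K) * A j * ((e : K) ^ i * A j ^ e) else 0)]
        simp [binomialBlockMatrix, vandermondeColumn, ite_mul]
    _ = ∑ i ∈ Finset.range ((r : ℕ) + 1),
          ((r : ℕ).choose i : K) * A j * ((e : K) ^ i * A j ^ e) := by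
        rw [← Finset.sum_filter, hrange]
    _ = vandermondeColumn A m (e + 1) ⟨j, r⟩ := by
        simp only [vandermondeColumn, Int.cast_add, Int.cast_one, add_pow, one_pow,
          Finset.sum_mul, zpow_add_one₀ (hA j)]
        exact Finset.sum_congr rfl fun i _ => by ring

end BinomialShift

theorem conjugated_vandermonde_cyclic_general (nA : ℕ) (A : Fin nA → ℂ)
    (hA0 : ∀ j, A j ≠ 0)
    (m : Fin nA → ℕ)
    (n : ℕ) (l : ℤ)
    (V : Matrix (Σ j : Fin nA, Fin (m j)) (Fin n) ℂ)
    (hV : ∀ (p : Σ j : Fin nA, Fin (m j)) (k : Fin n),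
      V p k = ((l - (k : ℕ) : ℤ) : ℂ) ^ (p.2 : ℕ) * A p.1 ^ (l - (k : ℕ) : ℤ))
    (D : Matrix (Σ j : Fin nA, Fin (m j)) (Σ j : Fin nA, Fin (m j)) ℂ)
    (hD : ∀ p q : Σ j : Fin nA, Fin (m j),
      D p q = if p.1 = q.1 ∧ (q.2 : ℕ) ≤ (p.2 : ℕ)
        then (Nat.choose (p.2 : ℕ) (q.2 : ℕ) : ℂ) * A p.1 else 0)
    (W : Matrix (Fin n) (Σ j : Fin nA, Fin (m j)) ℂ)
    (hW₂ : W * V = 1) :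
    ∀ k k' : Fin n, 1 ≤ (k' : ℕ) →
      (W * D * V) k k' = if (k' : ℕ) = (k : ℕ) + 1 then 1 else 0 := by
  intro k k' hk'
  let k₀ : Fin n := ⟨k' - 1, by omega⟩
  have hD' : D = binomialBlockMatrix A m := Matrix.ext hD
  have hVcol : ∀ c : Fin n, (fun p => V p c) = vandermondeColumn A m (l - (c : ℕ)) :=
    fun c => funext fun p => hV p c
  have hshift : (l - (k' : ℕ) + 1 : ℤ) = l - (k₀ : ℕ) := by simp only [k₀]; omega
  have hcol : ∀ p, (D * V) p k' = V p k₀ := fun p => by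
    have := congrFun (binomialBlockMatrix_mulVec_vandermondeColumn hA0 (l - (k' : ℕ))) p
    rwa [← hD', ← hVcol, hshift, ← hVcol] at this
  calc (W * D * V) k k' = (W * V) k k₀ := by
        rw [Matrix.mul_assoc, Matrix.mul_apply, Matrix.mul_apply]
        exact Finset.sum_congr rfl fun p _ => by rw [hcol]
    _ = if (k' : ℕ) = (k : ℕ) + 1 then 1 else 0 := by
        rw [hW₂, Matrix.one_apply]
        exact if_congr (by simp only [k₀, Fin.ext_iff]; omega) rfl rfl

/-- With `A₁,…,A_{n_A}` distinct nonzero complex numbers, multiplicities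
`mⱼ ≥ 1`, `n = Σⱼ mⱼ`, `l ∈ ℤ`, the generalized Vandermonde matrix `V = V_{A,m,l}` (entries
`(l-k)^r Aⱼ^(l-k)`), the block-diagonal matrix `D = D_{A,m}` (entries `C(r,r')·Aⱼ` at
`((j,r),(j,r'))` for `r' ≤ r`, else `0`), and `W` a two-sided inverse of `V`, the conjugated
matrix `C = V⁻¹ D V = W * D * V` is of cyclic form: for all `k` and all `k' ≥ 1`,
`C k k' = 1` if `k' = k + 1` and `C k k' = 0` otherwise (the `0`-th column is unconstrained). -/
theorem conjugated_vandermonde_cyclic (nA : ℕ) (A : Fin nA → ℂ)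
    (hA : Function.Injective A) (hA0 : ∀ j, A j ≠ 0)
    (m : Fin nA → ℕ) (hm : ∀ j, 1 ≤ m j)
    (n : ℕ) (hn : n = ∑ j, m j) (l : ℤ)
    (V : Matrix (Σ j : Fin nA, Fin (m j)) (Fin n) ℂ)
    (hV : ∀ (p : Σ j : Fin nA, Fin (m j)) (k : Fin n),
      V p k = ((l - (k : ℕ) : ℤ) : ℂ) ^ (p.2 : ℕ) * A p.1 ^ (l - (k : ℕ) : ℤ))
    (D : Matrix (Σ j : Fin nA, Fin (m j)) (Σ j : Fin nA, Fin (m j)) ℂ)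
    (hD : ∀ p q : Σ j : Fin nA, Fin (m j),
      D p q = if p.1 = q.1 ∧ (q.2 : ℕ) ≤ (p.2 : ℕ)
        then (Nat.choose (p.2 : ℕ) (q.2 : ℕ) : ℂ) * A p.1 else 0)
    (W : Matrix (Fin n) (Σ j : Fin nA, Fin (m j)) ℂ)
    (hW₁ : V * W = 1) (hW₂ : W * V = 1) :
    ∀ k k' : Fin n, 1 ≤ (k' : ℕ) →
      (W * D * V) k k' = if (k' : ℕ) = (k : ℕ) + 1 then 1 else 0 :=
  conjugated_vandermonde_cyclic_general nA A hA0 m n l V hV D hD W hW₂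
end

section
/- Let α = (α_1,…,α_n), β = (β_1,…,β_n) be tuples of real numbers, A = e^{2πiα_{i₀}} for some i₀, m_A = #{i : e^{2πiα_i} = A}, and 0 ≤ r < m_A. Then for every w with Re w < 0, the analytic continuation of g_{A,r} once counterclockwise around 0 satisfies g_{A,r}(w + 2πi) = A · Σ_{p=0}^r binom(r,p) · g_{A,p}(w). Consequently, in the basis S_{A_j,r}, the local monodromy of the hypergeometric equation around 0 is the transposed block-diagonal matrix D_{A,m_A}^t. -/
/-!
Since `e^{2πil} = 1`, the `l`-th summand of `g_{A,r}(w + 2πi)` is the `r`-th derivative at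
`t = ν` of the `l`-th summand of `g_{A,0}(w)` times `e^{2πit}`. Leibniz's rule and `e^{2πiν} = A`
turn it into `A · Σₚ C(r,p) (2πi)^{r-p}` times the `p`-th derivatives, and it remains to exchange
this finite sum with the series over `l`. The series converge for `Re w < 0`: the recurrence
`Γ(z+1) = zΓ(z)` gives `𝚪_{α,β}(s+1) = ∏(βᵢ - s)/∏(s - αᵢ + 1) · 𝚪_{α,β}(s)`, whose ratio tends
to `1`, so `𝚪_{α,β}(l + t)` grows subexponentially in `l` uniformly for bounded `t`, and Cauchy's
estimates bound the derivatives by a geometric series in `e^{Re w / 2}`.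
-/

open Complex Filter Set Finset
open scoped Real

noncomputable section

/-- The balanced gamma product `𝚪_{α,β}(s)`. -/
def gammaProd {n : ℕ} (α β : Fin n → ℂ) (s : ℂ) : ℂ :=
  (∏ i, (Complex.Gamma (s - α i + 1))⁻¹) * ∏ i, (Complex.Gamma (-s + β i + 1))⁻¹

/-- The local solution `g_{A,r}(w) = Σ_{l≥0} (2πi)^{-r} (d/dt)^r [𝚪_{α,β}(l+t)e^{(l+t)w}]|_{t=ν}`
of the hypergeometric equation at `0`, in the exponential coordinate `z = e^w`. -/
def gA {n : ℕ} (α β : Fin n → ℝ) (ν : ℝ) (r : ℕ) (w : ℂ) : ℂ :=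
  ∑' l : ℕ, ((2 * (π : ℂ) * Complex.I) ^ r)⁻¹ *
    iteratedDeriv r
      (fun t : ℂ =>
        gammaProd (fun i => (α i : ℂ)) (fun i => (β i : ℂ)) ((l : ℂ) + t) *
          Complex.exp (((l : ℂ) + t) * w)) (ν : ℂ)

open Metric

lemma Complex.inv_Gamma_eq_mul_inv_Gamma_add_one (z : ℂ) :
    (Gamma z)⁻¹ = z * (Gamma (z + 1))⁻¹ := by
  rcases eq_or_ne z 0 with rfl | hz
  · simp
  · rw [Gamma_add_one z hz, mul_inv, ← mul_assoc, mul_inv_cancel₀ hz, one_mul]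

lemma norm_cexp_natCast_add_mul_le (l : ℕ) (t w : ℂ) :
    ‖exp ((l + t) * w)‖ ≤ Real.exp (‖t‖ * ‖w‖) * Real.exp w.re ^ l := by
  rw [norm_exp, ← Real.exp_nat_mul, ← Real.exp_add]
  gcongr
  have : ((l + t) * w).re = l * w.re + (t * w).re := by simp [add_mul]
  linarith [re_le_norm (t * w), norm_mul t w]

lemma summable_iteratedDeriv_of_eventually_norm_le_on_sphere {E : Type*} [NormedAddCommGroup E]
    [NormedSpace ℂ E] [CompleteSpace E] {f : ℕ → ℂ → E} (hf : ∀ l, Differentiable ℂ (f l))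
    {c : ℂ} {R : ℝ} (hR : 0 < R) {g : ℕ → ℝ} (hg : Summable g)
    (hfg : ∀ᶠ l in atTop, ∀ z ∈ sphere c R, ‖f l z‖ ≤ g l) (p : ℕ) :
    Summable fun l => iteratedDeriv p (f l) c :=
  .of_norm_bounded_eventually_nat (hg.mul_left (p.factorial / R ^ p)) <| hfg.mono fun l hl =>
    (norm_iteratedDeriv_le_of_forall_mem_sphere_norm_le p hR (hf l).diffContOnCl hl).trans_eq
      (by ring)

lemma iteratedDeriv_mul_cexp_const_mul {f : ℂ → ℂ} (hf : Differentiable ℂ f) (a x : ℂ) (r : ℕ) :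
    iteratedDeriv r (fun t => f t * exp (a * t)) x =
      ∑ p ∈ range (r + 1), r.choose p * iteratedDeriv p f x * (a ^ (r - p) * exp (a * x)) := by
  rw [iteratedDeriv_fun_mul hf.contDiff.contDiffAt
    (by fun_prop : ContDiffAt ℂ r (fun t => exp (a * t)) x)]
  simp only [iteratedDeriv_cexp_const_mul]

lemma sum_sigma_ite_choose_mul {ι R : Type*} [Fintype ι] [DecidableEq ι] [CommSemiring R]
    {m : ι → ℕ} (a : ι → R) (g : ι → ℕ → R) (p : Σ j, Fin (m j)) :
    ∑ q : Σ j, Fin (m j), (if p.1 = q.1 ∧ (q.2 : ℕ) ≤ p.2 then (p.2 : ℕ).choose q.2 * a p.1 else 0)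
        * g q.1 q.2 =
      a p.1 * ∑ k ∈ range (p.2 + 1), (p.2 : ℕ).choose k * g p.1 k := by
  rw [← Finset.univ_sigma_univ, sum_sigma, sum_eq_single p.1
    (fun j _ hj => sum_eq_zero fun k _ => by simp [Ne.symm hj]) (by simp)]
  obtain ⟨j, k, hk⟩ := p
  simp only [true_and, ite_mul, zero_mul]
  rw [Fin.sum_univ_eq_sum_range
    (fun i => if i ≤ (k : ℕ) then (k : ℕ).choose i * a j * g j i else 0), ← sum_filter, mul_sum]
  have hrange : (range (m j)).filter (· ≤ (k : ℕ)) = range (k + 1) := by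
    ext i
    simp only [mem_filter, Finset.mem_range]
    omega
  rw [hrange]
  exact sum_congr rfl fun i _ => by ring

section GammaProd

variable {n : ℕ} (α β : Fin n → ℂ)

lemma differentiable_gammaProd : Differentiable ℂ (gammaProd α β) := by
  have hinv : Differentiable ℂ fun s => (Gamma s)⁻¹ := by
    simpa only [one_div] using differentiable_one_div_Gamma
  exact (Differentiable.fun_finsetProd fun i _ => hinv.comp (by fun_prop)).mul
    (Differentiable.fun_finsetProd fun i _ => hinv.comp (by fun_prop))

lemma prod_mul_gammaProd_add_one (s : ℂ) :
    (∏ i, (s - α i + 1)) * gammaProd α β (s + 1) = (∏ i, (β i - s)) * gammaProd α β s := by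
  have hα (i : Fin n) : (s - α i + 1) * (Gamma (s + 1 - α i + 1))⁻¹ = (Gamma (s - α i + 1))⁻¹ := by
    rw [inv_Gamma_eq_mul_inv_Gamma_add_one (s - α i + 1)]; ring_nf
  have hβ (i : Fin n) : (Gamma (-(s + 1) + β i + 1))⁻¹ = (β i - s) * (Gamma (-s + β i + 1))⁻¹ := by
    rw [inv_Gamma_eq_mul_inv_Gamma_add_one]; ring_nf
  simp only [gammaProd, hβ, prod_mul_distrib, ← hα]
  ring

lemma norm_gammaProd_add_one_le {s : ℂ} {a b : ℝ} (ha : 0 < a)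
    (hα : ∀ i, a ≤ ‖s - α i + 1‖) (hβ : ∀ i, ‖β i - s‖ ≤ b) :
    ‖gammaProd α β (s + 1)‖ ≤ (b / a) ^ n * ‖gammaProd α β s‖ := by
  have key : a ^ n * ‖gammaProd α β (s + 1)‖ ≤ b ^ n * ‖gammaProd α β s‖ := by
    calc a ^ n * ‖gammaProd α β (s + 1)‖
        ≤ (∏ i, ‖s - α i + 1‖) * ‖gammaProd α β (s + 1)‖ := by
          gcongr
          simpa using Finset.prod_le_prod (s := univ) (fun i _ => ha.le) (fun i _ => hα i)
      _ = (∏ i, ‖β i - s‖) * ‖gammaProd α β s‖ := by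
          simp only [← norm_prod, ← norm_mul, prod_mul_gammaProd_add_one]
      _ ≤ b ^ n * ‖gammaProd α β s‖ := by
          gcongr
          simpa using Finset.prod_le_prod (s := univ) (fun i _ => norm_nonneg _) (fun i _ => hβ i)
  rw [div_pow, div_mul_eq_mul_div, le_div_iff₀ (pow_pos ha n)]
  linarith

open Topology in
lemma eventually_norm_gammaProd_natCast_add_le (R : ℝ) {q : ℝ} (hq : 1 < q) :
    ∃ K, ∀ᶠ l : ℕ in atTop, ∀ t : ℂ, ‖t‖ ≤ R → ‖gammaProd α β (l + t)‖ ≤ K * q ^ l := by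
  set c := R + 1 + ∑ i, (‖α i‖ + ‖β i‖)
  have hsum (i : Fin n) : ‖α i‖ + ‖β i‖ ≤ ∑ j, (‖α j‖ + ‖β j‖) :=
    single_le_sum (f := fun j => ‖α j‖ + ‖β j‖) (fun j _ => by positivity) (mem_univ i)
  have step (l : ℕ) (hl : c < l) (t : ℂ) (ht : ‖t‖ ≤ R) :
      ‖gammaProd α β ((l + 1 : ℕ) + t)‖ ≤ ((l + c) / (l - c)) ^ n * ‖gammaProd α β (l + t)‖ := by
    rw [show ((l + 1 : ℕ) : ℂ) + t = l + t + 1 by push_cast; ring]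
    refine norm_gammaProd_add_one_le α β (by linarith) (fun i => ?_) (fun i => ?_)
    · have h₁ : ‖t - α i + 1‖ ≤ R + ‖α i‖ + 1 := by
        have := norm_sub_le t (α i)
        linarith [norm_add_le (t - α i) 1, norm_one (α := ℂ)]
      have h₂ := norm_sub_norm_le (l : ℂ) (-(t - α i + 1))
      rw [norm_neg, Complex.norm_natCast, sub_neg_eq_add,
        show (l : ℂ) + (t - α i + 1) = l + t - α i + 1 by ring] at h₂
      linarith [hsum i, norm_nonneg (β i)]
    · have hlt := norm_add_le (l : ℂ) t
      rw [Complex.norm_natCast] at hlt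
      linarith [norm_sub_le (β i) (l + t), hsum i, norm_nonneg (α i)]
  have hratio : Tendsto (fun l : ℕ => ((l + c) / (l - c)) ^ n) atTop (𝓝 1) := by
    have h₀ : Tendsto (fun l : ℕ => c / l) atTop (𝓝 0) := tendsto_const_div_atTop_nhds_zero_nat c
    have := (((tendsto_const_nhds (x := (1 : ℝ))).add h₀).div
      (tendsto_const_nhds.sub h₀) (by norm_num : (1 : ℝ) - 0 ≠ 0)).pow n
    refine (by simpa using this :
      Tendsto (fun l : ℕ => ((1 + c / l) / (1 - c / l)) ^ n) _ _).congr' ?_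
    filter_upwards [eventually_gt_atTop 0] with l hl
    have : (l : ℝ) ≠ 0 := by positivity
    field_simp
  obtain ⟨L, hL⟩ := eventually_atTop.1 ((hratio.eventually (ge_mem_nhds hq)).and
    (tendsto_natCast_atTop_atTop.eventually_gt_atTop c))
  obtain ⟨K₀, hK₀⟩ := (isCompact_closedBall (0 : ℂ) R).exists_bound_of_continuousOn
    (f := fun t => gammaProd α β (L + t))
    ((differentiable_gammaProd α β).continuous.comp (by fun_prop)).continuousOn
  refine ⟨K₀ * (q ^ L)⁻¹, eventually_atTop.2 ⟨L, fun l hl => ?_⟩⟩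
  induction l, hl using Nat.le_induction with
  | base =>
    intro t ht
    rw [mul_assoc, inv_mul_cancel₀ (by positivity), mul_one]
    exact hK₀ t (mem_closedBall_zero_iff.2 ht)
  | succ l hl ih =>
    intro t ht
    calc ‖gammaProd α β ((l + 1 : ℕ) + t)‖
        ≤ ((l + c) / (l - c)) ^ n * ‖gammaProd α β (l + t)‖ := step l (hL l hl).2 t ht
      _ ≤ q * (K₀ * (q ^ L)⁻¹ * q ^ l) :=
          mul_le_mul (hL l hl).1 (ih t ht) (norm_nonneg _) (by linarith)
      _ = K₀ * (q ^ L)⁻¹ * q ^ (l + 1) := by ring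

lemma summable_iteratedDeriv_gammaProd_mul_cexp {w : ℂ} (hw : w.re < 0) (p : ℕ) (c : ℂ) :
    Summable fun l : ℕ =>
      iteratedDeriv p (fun t => gammaProd α β (l + t) * exp ((l + t) * w)) c := by
  set q := Real.exp (-(w.re / 2))
  obtain ⟨K, hK⟩ := eventually_norm_gammaProd_natCast_add_le α β (‖c‖ + 1)
    (Real.one_lt_exp_iff.2 (by linarith) : 1 < q)
  have hq : q * Real.exp w.re = Real.exp (w.re / 2) := by rw [← Real.exp_add]; ring_nf
  have hgeom := summable_geometric_of_lt_one (Real.exp_pos (w.re / 2)).le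
    (Real.exp_lt_one_iff.2 (by linarith))
  refine summable_iteratedDeriv_of_eventually_norm_le_on_sphere (fun l => ?_) one_pos
    (hgeom.mul_left (K * Real.exp ((‖c‖ + 1) * ‖w‖))) (hK.mono fun l hl z hz => ?_) p
  · have := differentiable_gammaProd α β
    fun_prop
  have hz : ‖z‖ ≤ ‖c‖ + 1 := by
    have := norm_sub_norm_le z c
    rw [← dist_eq_norm, mem_sphere.1 hz] at this
    linarith
  have hG := hl z hz
  calc ‖gammaProd α β (l + z) * exp ((l + z) * w)‖
      ≤ K * q ^ l * (Real.exp ((‖c‖ + 1) * ‖w‖) * Real.exp w.re ^ l) := by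
        rw [norm_mul]
        refine mul_le_mul hG ((norm_cexp_natCast_add_mul_le l z w).trans ?_) (norm_nonneg _)
          ((norm_nonneg _).trans hG)
        gcongr
    _ = K * Real.exp ((‖c‖ + 1) * ‖w‖) * Real.exp (w.re / 2) ^ l := by rw [← hq]; ring

end GammaProd

def gATerm {n : ℕ} (α β : Fin n → ℝ) (ν : ℝ) (r : ℕ) (w : ℂ) (l : ℕ) : ℂ :=
  ((2 * π * I) ^ r)⁻¹ * iteratedDeriv r
    (fun t => gammaProd (fun i => (α i : ℂ)) (fun i => (β i : ℂ)) (l + t) * exp ((l + t) * w)) ν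

section gA

variable {n : ℕ} (α β : Fin n → ℝ) {ν : ℝ} {A : ℂ}

lemma gATerm_add_two_pi_I (hA : exp (2 * π * I * ν) = A) (r : ℕ) (w : ℂ) (l : ℕ) :
    gATerm α β ν r (w + 2 * π * I) l =
      A * ∑ p ∈ range (r + 1), r.choose p * gATerm α β ν p w l := by
  simp only [gATerm]
  have hG := differentiable_gammaProd (fun i => (α i : ℂ)) (fun i => (β i : ℂ))
  generalize gammaProd (fun i => (α i : ℂ)) (fun i => (β i : ℂ)) = G at hG ⊢
  have hshift : (fun t : ℂ => G (l + t) * exp ((l + t) * (w + 2 * π * I))) =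
      fun t => G (l + t) * exp ((l + t) * w) * exp (2 * π * I * t) := by
    ext t
    rw [show (l + t) * (w + 2 * π * I) = (l + t) * w + l * (2 * π * I) + 2 * π * I * t by ring,
      exp_add, exp_add, exp_nat_mul_two_pi_mul_I]
    ring
  rw [hshift, iteratedDeriv_mul_cexp_const_mul (by fun_prop), hA, mul_sum, mul_sum]
  refine sum_congr rfl fun p hp => ?_
  have hpow : ((2 * π * I : ℂ) ^ r)⁻¹ * (2 * π * I) ^ (r - p) = ((2 * π * I) ^ p)⁻¹ := by
    rw [← Nat.add_sub_cancel' (Nat.lt_succ_iff.1 (Finset.mem_range.1 hp)), pow_add,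
      Nat.add_sub_cancel_left]
    field_simp [two_pi_I_ne_zero]
  linear_combination (r.choose p * A *
    iteratedDeriv p (fun t => G (l + t) * exp ((l + t) * w)) ν) * hpow

theorem gA_add_two_pi_I (hA : exp (2 * π * I * ν) = A) (r : ℕ) {w : ℂ} (hw : w.re < 0) :
    gA α β ν r (w + 2 * π * I) = A * ∑ p ∈ range (r + 1), r.choose p * gA α β ν p w := by
  have hsum (p : ℕ) : Summable (gATerm α β ν p w) :=
    (summable_iteratedDeriv_gammaProd_mul_cexp _ _ hw p ν).mul_left _
  calc gA α β ν r (w + 2 * π * I) = ∑' l, gATerm α β ν r (w + 2 * π * I) l := rfl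
    _ = ∑' l, A * ∑ p ∈ range (r + 1), r.choose p * gATerm α β ν p w l :=
        tsum_congr (gATerm_add_two_pi_I α β hA r w)
    _ = A * ∑ p ∈ range (r + 1), r.choose p * ∑' l, gATerm α β ν p w l := by
        rw [tsum_mul_left, Summable.tsum_finsetSum fun p _ => (hsum p).mul_left _]
        simp_rw [tsum_mul_left]
    _ = A * ∑ p ∈ range (r + 1), r.choose p * gA α β ν p w := rfl

end gA

theorem monodromy_at_zero_general (n nA : ℕ) (α β : Fin n → ℝ)
    (A : Fin nA → ℂ)
    (m : Fin nA → ℕ)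
    (ν : Fin nA → ℝ)
    (hν₁ : ∀ j, ∃ i, α i = ν j ∧ Complex.exp (2 * (π : ℂ) * Complex.I * (α i : ℂ)) = A j)
    (D : Matrix (Σ j : Fin nA, Fin (m j)) (Σ j : Fin nA, Fin (m j)) ℂ)
    (hD : ∀ p q : Σ j : Fin nA, Fin (m j),
      D p q = if p.1 = q.1 ∧ (q.2 : ℕ) ≤ (p.2 : ℕ)
        then (Nat.choose (p.2 : ℕ) (q.2 : ℕ) : ℂ) * A p.1 else 0) :
    (∀ j : Fin nA, ∀ r : ℕ, r < m j → ∀ w : ℂ, w.re < 0 →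
      gA α β (ν j) r (w + 2 * (π : ℂ) * Complex.I) =
        A j * ∑ p ∈ Finset.range (r + 1), (Nat.choose r p : ℂ) * gA α β (ν j) p w) ∧
    (∀ p : Σ j : Fin nA, Fin (m j), ∀ w : ℂ, w.re < 0 →
      gA α β (ν p.1) (p.2 : ℕ) (w + 2 * (π : ℂ) * Complex.I) =
        ∑ q : Σ j : Fin nA, Fin (m j), D p q * gA α β (ν q.1) (q.2 : ℕ) w) := by
  have hA (j : Fin nA) : exp (2 * π * I * ν j) = A j := by
    obtain ⟨i, hi, hexp⟩ := hν₁ j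
    rwa [← hi]
  refine ⟨fun j r _ w hw => gA_add_two_pi_I α β (hA j) r hw, fun p w hw => ?_⟩
  simp only [hD]
  rw [sum_sigma_ite_choose_mul A (fun j k => gA α β (ν j) k w)]
  exact gA_add_two_pi_I α β (hA p.1) p.2 hw

/-- For real tuples `α, β`, the local solutions `g_{Aⱼ,r}` at `0` transform
under `w ↦ w + 2πi` (one counterclockwise loop around `0`) by
`g_{Aⱼ,r}(w + 2πi) = Aⱼ · Σ_{p=0}^r C(r,p) g_{Aⱼ,p}(w)`; consequently, in the basis
`S_{Aⱼ,r}` the local monodromy around `0` is the transposed block-diagonal matrix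
`D_{A,m_A}^t`, i.e. `g_p(w + 2πi) = Σ_q D_{p,q} g_q(w)` for the matrix `D = D_{A,m_A}` with
entries `D_{(j,r),(j',r')} = C(r,r')·Aⱼ` if `j = j'` and `r' ≤ r`, and `0` otherwise. -/
theorem monodromy_at_zero (n nA : ℕ) (α β : Fin n → ℝ)
    (A : Fin nA → ℂ) (hinj : Function.Injective A)
    (hval : ∀ j, ∃ i, Complex.exp (2 * (π : ℂ) * Complex.I * (α i : ℂ)) = A j)
    (hsurj : ∀ i, ∃ j, Complex.exp (2 * (π : ℂ) * Complex.I * (α i : ℂ)) = A j)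
    (m : Fin nA → ℕ)
    (hm : ∀ j, m j =
      Nat.card {i : Fin n // Complex.exp (2 * (π : ℂ) * Complex.I * (α i : ℂ)) = A j})
    (hn : ∑ j, m j = n)
    (ν : Fin nA → ℝ)
    (hν₁ : ∀ j, ∃ i, α i = ν j ∧ Complex.exp (2 * (π : ℂ) * Complex.I * (α i : ℂ)) = A j)
    (hν₂ : ∀ j i, Complex.exp (2 * (π : ℂ) * Complex.I * (α i : ℂ)) = A j → ν j ≤ α i)
    (D : Matrix (Σ j : Fin nA, Fin (m j)) (Σ j : Fin nA, Fin (m j)) ℂ)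
    (hD : ∀ p q : Σ j : Fin nA, Fin (m j),
      D p q = if p.1 = q.1 ∧ (q.2 : ℕ) ≤ (p.2 : ℕ)
        then (Nat.choose (p.2 : ℕ) (q.2 : ℕ) : ℂ) * A p.1 else 0) :
    (∀ j : Fin nA, ∀ r : ℕ, r < m j → ∀ w : ℂ, w.re < 0 →
      gA α β (ν j) r (w + 2 * (π : ℂ) * Complex.I) =
        A j * ∑ p ∈ Finset.range (r + 1), (Nat.choose r p : ℂ) * gA α β (ν j) p w) ∧
    (∀ p : Σ j : Fin nA, Fin (m j), ∀ w : ℂ, w.re < 0 →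
      gA α β (ν p.1) (p.2 : ℕ) (w + 2 * (π : ℂ) * Complex.I) =
        ∑ q : Σ j : Fin nA, Fin (m j), D p q * gA α β (ν q.1) (q.2 : ℕ) w) :=
  monodromy_at_zero_general n nA α β A m ν hν₁ D hD
end
end

section
/- Let α, β ∈ ℂ with Re(β − α) > 0. Then for every s ∈ ℂ, ∫_{−1/2}^{1/2} e^{−2πisφ} · e^{2πiαφ} · (1 + e^{2πiφ})^{β−α} dφ = Γ(β − α + 1) · 𝚪_{α,β}(s), i.e. the Fourier transform of h_{α,β} equals the balanced gamma product 𝚪_{α,β}(s) = 1/(Γ(s − α + 1) · Γ(−s + β + 1)). -/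
/-!
For `Re a > 0` and `0 < r < 1`, expand `(1 + r e^{2πiφ})^z` and `(1 - r x)^z` binomially. The
Fourier moments `∫_{-1/2}^{1/2} e^{2πi(a+n)φ} dφ = (-1)^n sin(πa) / (π (a+n))` are `sin(πa)/π` times
the Beta moments `∫_0^1 x^{a-1} (-x)^n dx = (-1)^n / (a+n)`, so the two integrals are proportional.
Letting `r → 1` (dominated convergence) gives
`∫ e^{2πiaφ} (1 + e^{2πiφ})^z dφ = sin(πa)/π · B(a, z+1) = Γ(z+1) / (Γ(1-a) Γ(a+z+1))`
by `B = ΓΓ/Γ` and the reflection formula. With `a = α - s` this is the theorem on the half-plane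
`Re s < Re α`; both sides are entire in `s`, so the identity theorem extends it to all of `ℂ`.
-/

open Complex MeasureTheory Filter Set
open scoped Real Topology Interval

theorem binomialSeries_apply_const {𝕂 : Type*} [Field 𝕂] [CharZero 𝕂] [TopologicalSpace 𝕂]
    [IsTopologicalRing 𝕂] (a y : 𝕂) (n : ℕ) :
    binomialSeries 𝕂 a n (fun _ => y) = Ring.choose a n * y ^ n := by
  rw [binomialSeries_apply, List.ofFn_const, List.prod_replicate, smul_eq_mul]

namespace Complex

theorem hasSum_choose_mul_pow (z : ℂ) {y : ℂ} (hy : ‖y‖ < 1) :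
    HasSum (fun n => Ring.choose z n * y ^ n) ((1 + y) ^ z) := by
  simpa only [binomialSeries_apply_const, zero_add] using
    one_add_cpow_hasFPowerSeriesOnBall_zero.hasSum (by simpa [← ofReal_norm] using hy)

theorem summable_norm_choose_mul_pow (z : ℂ) {y : ℂ} (hy : ‖y‖ < 1) :
    Summable (fun n => ‖Ring.choose z n * y ^ n‖) := by
  simpa only [binomialSeries_apply_const] using (binomialSeries ℂ z).summable_norm_apply
    (Metric.eball_subset_eball binomialSeries_radius_ge_one (by simpa [← ofReal_norm] using hy))

theorem norm_cpow_le_of_norm_le {u z : ℂ} {R : ℝ} (hu : ‖u‖ ≤ R) (hz : 0 ≤ z.re) :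
    ‖u ^ z‖ ≤ R ^ z.re * Real.exp (π * |z.im|) := by
  refine (norm_cpow_le u z).trans ?_
  rw [div_eq_mul_inv, ← Real.exp_neg]
  have harg : -(u.arg * z.im) ≤ π * |z.im| :=
    calc -(u.arg * z.im) ≤ |u.arg| * |z.im| := by rw [← abs_mul]; exact neg_le_abs _
      _ ≤ π * |z.im| := by gcongr; exact abs_arg_le_pi u
  exact mul_le_mul (Real.rpow_le_rpow (norm_nonneg u) hu hz) (Real.exp_le_exp.2 harg)
    (Real.exp_nonneg _) (Real.rpow_nonneg ((norm_nonneg u).trans hu) _)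

theorem inv_Gamma_mul_inv_Gamma_one_sub (a : ℂ) :
    (Gamma a)⁻¹ * (Gamma (1 - a))⁻¹ = sin (π * a) / π := by
  rw [← mul_inv, Gamma_mul_Gamma_one_sub, inv_div]

end Complex

theorem Differentiable.eq_of_eqOn_of_isOpen {E : Type*} [NormedAddCommGroup E]
    [NormedSpace ℂ E] [CompleteSpace E] {f g : ℂ → E} (hf : Differentiable ℂ f)
    (hg : Differentiable ℂ g) {U : Set ℂ} (hU : IsOpen U) {z₀ : ℂ} (hz₀ : z₀ ∈ U)
    (hfg : EqOn f g U) : f = g :=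
  AnalyticOnNhd.eq_of_eventuallyEq (analyticOnNhd_univ_iff_differentiable.2 hf)
    (analyticOnNhd_univ_iff_differentiable.2 hg) (eventually_of_mem (hU.mem_nhds hz₀) hfg)

theorem differentiable_intervalIntegral_cexp_mul {f : ℝ → ℂ} {a b : ℝ}
    (hf : IntervalIntegrable f volume a b) :
    Differentiable ℂ (fun t : ℂ => ∫ x in a..b, exp (t * x) * f x) := by
  intro t₀
  set R := |a| + |b|
  have hx : ∀ x ∈ Ι a b, |x| ≤ R := fun x hx => by
    rcases mem_uIcc.1 (uIoc_subset_uIcc hx) with ⟨h1, h2⟩ | ⟨h1, h2⟩ <;> rw [abs_le] <;>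
      constructor <;> linarith [neg_abs_le a, neg_abs_le b, le_abs_self a, le_abs_self b]
  have hmeas : ∀ t : ℂ, AEStronglyMeasurable (fun x : ℝ => exp (t * x) * f x)
      (volume.restrict (Ι a b)) := fun t =>
    (by fun_prop : Continuous fun x : ℝ => exp (t * x)).aestronglyMeasurable.mul hf.def'.1
  have hderiv : ∀ (x : ℝ) (t : ℂ), HasDerivAt (fun t : ℂ => exp (t * x) * f x)
      (x * exp (t * x) * f x) t := fun x t => by
    simpa [mul_comm] using ((hasDerivAt_mul_const (x : ℂ)).cexp).mul_const (f x)
  have hbound : ∀ x ∈ Ι a b, ∀ t ∈ Metric.ball t₀ 1,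
      ‖(x : ℂ) * exp (t * x) * f x‖ ≤ R * Real.exp ((‖t₀‖ + 1) * R) * ‖f x‖ := by
    intro x hxab t ht
    have ht' : ‖t‖ ≤ ‖t₀‖ + 1 :=
      (norm_le_norm_add_norm_sub' t t₀).trans (by linarith [mem_ball_iff_norm.1 ht])
    rw [norm_mul, norm_mul, norm_real, Real.norm_eq_abs, Complex.norm_exp]
    gcongr
    · exact hx x hxab
    · calc (t * x).re = t.re * x := by simp
        _ ≤ |t.re| * |x| := by rw [← abs_mul]; exact le_abs_self _
        _ ≤ ‖t‖ * |x| := by gcongr; exact abs_re_le_norm t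
        _ ≤ (‖t₀‖ + 1) * R := by gcongr; exact hx x hxab
  exact (intervalIntegral.hasDerivAt_integral_of_dominated_loc_of_deriv_le
    (Metric.ball_mem_nhds t₀ one_pos) (Eventually.of_forall hmeas)
    (hf.continuousOn_mul (by fun_prop))
    (((by fun_prop : Continuous fun x : ℝ => (x : ℂ) * exp (t₀ * x)).aestronglyMeasurable).mul
      hf.def'.1)
    (ae_of_all _ hbound) (hf.norm.const_mul _)
    (ae_of_all _ fun x _ t _ => hderiv x t)).2.differentiableAt

section BinomialIntegral

variable {X : Type*} [MeasurableSpace X] {μ : Measure X} {g w : X → ℂ}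

theorem hasSum_integral_mul_one_add_mul_cpow (hg : Integrable g μ)
    (hw : AEStronglyMeasurable w μ) (hw1 : ∀ᵐ x ∂μ, ‖w x‖ ≤ 1) (z : ℂ) {ρ : ℂ} (hρ : ‖ρ‖ < 1) :
    HasSum (fun n => Ring.choose z n * ρ ^ n * ∫ x, g x * w x ^ n ∂μ)
      (∫ x, g x * (1 + ρ * w x) ^ z ∂μ) := by
  set c : ℕ → ℂ := fun n => Ring.choose z n * ρ ^ n
  simp_rw [← integral_const_mul]
  refine hasSum_integral_of_dominated_convergence (fun n x => ‖c n‖ * ‖g x‖)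
    (fun n => aestronglyMeasurable_const.mul (hg.1.mul (hw.pow n))) (fun n => ?_)
    (ae_of_all _ fun x => (summable_norm_choose_mul_pow z hρ).mul_right _) ?_ ?_
  · filter_upwards [hw1] with x hx
    rw [norm_mul]
    gcongr
    rw [norm_mul, norm_pow]
    exact mul_le_of_le_one_right (norm_nonneg (g x)) (pow_le_one₀ (norm_nonneg (w x)) hx)
  · simpa only [tsum_mul_right] using hg.norm.const_mul _
  · filter_upwards [hw1] with x hx
    have hρw : ‖ρ * w x‖ < 1 := by
      rw [norm_mul]; exact mul_lt_one_of_nonneg_of_lt_one_left (norm_nonneg _) hρ hx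
    simpa only [mul_pow, c, mul_assoc, mul_left_comm (g x)] using
      (hasSum_choose_mul_pow z hρw).mul_left (g x)

theorem tendsto_integral_mul_one_add_mul_cpow (hg : Integrable g μ)
    (hw : AEStronglyMeasurable w μ) (hw1 : ∀ᵐ x ∂μ, ‖w x‖ ≤ 1)
    (hslit : ∀ᵐ x ∂μ, 1 + w x ∈ slitPlane) {z : ℂ} (hz : 0 ≤ z.re) :
    Tendsto (fun r : ℝ => ∫ x, g x * (1 + r * w x) ^ z ∂μ) (𝓝[<] 1)
      (𝓝 (∫ x, g x * (1 + w x) ^ z ∂μ)) := by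
  refine tendsto_integral_filter_of_dominated_convergence
    (fun x => ‖g x‖ * (2 ^ z.re * Real.exp (π * |z.im|)))
    (Eventually.of_forall fun r => hg.1.mul
      ((aestronglyMeasurable_const.add (aestronglyMeasurable_const.mul hw)).aemeasurable.pow_const
        z).aestronglyMeasurable) ?_ (hg.norm.mul_const _) ?_
  · filter_upwards [Ioo_mem_nhdsLT zero_lt_one] with r hr
    filter_upwards [hw1] with x hx
    rw [norm_mul]
    refine mul_le_mul_of_nonneg_left (norm_cpow_le_of_norm_le ?_ hz) (norm_nonneg _)
    calc ‖1 + (r : ℂ) * w x‖ ≤ 1 + |r| * ‖w x‖ := by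
          simpa [norm_mul] using norm_add_le (1 : ℂ) (r * w x)
      _ ≤ 2 := by rw [abs_of_pos hr.1]; nlinarith [hr.2, norm_nonneg (w x)]
  · filter_upwards [hslit] with x hx
    have hlim : Tendsto (fun r : ℝ => 1 + (r : ℂ) * w x) (𝓝[<] 1) (𝓝 (1 + w x)) := by
      have := ((continuous_ofReal.tendsto 1).mul_const (w x)).const_add 1
      simpa using this.mono_left nhdsWithin_le_nhds
    exact ((continuousAt_cpow_const hx).tendsto.comp hlim).const_mul (g x)

end BinomialIntegral

theorem integral_cexp_two_pi_I_mul {b : ℂ} (hb : b ≠ 0) :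
    ∫ φ in (-(1 : ℝ) / 2)..(1 / 2), exp (2 * π * I * b * φ) = sin (π * b) / (π * b) := by
  have hπ : (π : ℂ) ≠ 0 := ofReal_ne_zero.2 Real.pi_ne_zero
  rw [integral_exp_mul_complex (by simp [hb, hπ, I_ne_zero]), sin]
  push_cast
  field_simp
  linear_combination (exp (π * I * b) - exp (-(π * I * b))) * I_sq

theorem setIntegral_cexp_two_pi_I_mul_mul_pow {a : ℂ} (n : ℕ) (ha : a + n ≠ 0) :
    ∫ φ in Ioo (-(1 : ℝ) / 2) (1 / 2), exp (2 * π * I * a * φ) * exp (2 * π * I * φ) ^ n =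
      sin (π * a) / π * ((-1) ^ n / (a + n)) := by
  have hexp : ∀ φ : ℝ, exp (2 * π * I * a * φ) * exp (2 * π * I * φ) ^ n =
      exp (2 * π * I * (a + n) * φ) := fun φ => by
    rw [← exp_nat_mul, ← exp_add]
    ring_nf
  simp_rw [hexp]
  rw [← integral_Ioc_eq_integral_Ioo, ← intervalIntegral.integral_of_le (by norm_num),
    integral_cexp_two_pi_I_mul ha, show (π : ℂ) * (a + n) = π * a + n * π by ring,
    sin_antiperiodic.add_nat_mul_eq n]
  field_simp

theorem setIntegral_cpow_mul_neg_pow {a : ℂ} (ha : 0 < a.re) (n : ℕ) :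
    ∫ x in Ioo (0 : ℝ) 1, (x : ℂ) ^ (a - 1) * (-(x : ℂ)) ^ n = (-1) ^ n / (a + n) := by
  have hx : ∀ x ∈ Ioo (0 : ℝ) 1, (x : ℂ) ^ (a - 1) * (-(x : ℂ)) ^ n =
      (-1) ^ n * (x : ℂ) ^ (a + n - 1) := fun x hx => by
    rw [neg_pow, show a + n - 1 = a - 1 + n by ring,
      cpow_add _ _ (ofReal_ne_zero.2 hx.1.ne'), cpow_natCast]
    ring
  have hre : 0 < (a + n).re := by simp; positivity
  rw [setIntegral_congr_fun measurableSet_Ioo hx, integral_const_mul,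
    ← integral_Ioc_eq_integral_Ioo, ← intervalIntegral.integral_of_le zero_le_one,
    integral_cpow (Or.inl (by simpa using hre)), sub_add_cancel,
    ofReal_zero, zero_cpow (ne_zero_of_re_pos hre)]
  simp [div_eq_mul_inv]

theorem one_add_cexp_two_pi_I_mul_mem_slitPlane {φ : ℝ} (hφ : φ ∈ Ioo (-(1 : ℝ) / 2) (1 / 2)) :
    1 + exp (2 * π * I * φ) ∈ slitPlane := by
  have hcos : 0 < Real.cos (π * φ) :=
    Real.cos_pos_of_mem_Ioo ⟨by nlinarith [Real.pi_pos, hφ.1], by nlinarith [Real.pi_pos, hφ.2]⟩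
  refine mem_slitPlane_iff.2 (Or.inl ?_)
  rw [show 2 * π * I * φ = (2 * (π * φ) : ℝ) * I by push_cast; ring,
    add_re, one_re, exp_ofReal_mul_I_re, Real.cos_two_mul]
  nlinarith

theorem continuous_one_add_cexp_two_pi_I_mul_cpow {z : ℂ} (hz : 0 < z.re) :
    Continuous fun φ : ℝ => (1 + exp (2 * π * I * φ)) ^ z := by
  have hbase : Continuous fun φ : ℝ => 1 + exp (2 * π * I * φ) := by fun_prop
  refine continuous_iff_continuousAt.2 fun φ =>
    (continuousAt_cpow_const_of_re_pos (Or.inl ?_) hz).comp hbase.continuousAt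
  rw [show 2 * π * I * φ = (2 * π * φ : ℝ) * I by push_cast; ring,
    add_re, one_re, exp_ofReal_mul_I_re]
  linarith [Real.neg_one_le_cos (2 * π * φ)]

theorem integral_cexp_mul_one_add_cexp_cpow_of_re_pos {a z : ℂ} (ha : 0 < a.re) (hz : 0 ≤ z.re) :
    ∫ φ in (-(1 : ℝ) / 2)..(1 / 2), exp (2 * π * I * a * φ) * (1 + exp (2 * π * I * φ)) ^ z =
      Gamma (z + 1) * ((Gamma (1 - a))⁻¹ * (Gamma (a + z + 1))⁻¹) := by
  set C := sin (π * a) / π with hC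
  set μ := volume.restrict (Ioo (-(1 : ℝ) / 2) (1 / 2))
  set g : ℝ → ℂ := fun φ => exp (2 * π * I * a * φ)
  set w : ℝ → ℂ := fun φ => exp (2 * π * I * φ)
  set ν := volume.restrict (Ioo (0 : ℝ) 1)
  set g' : ℝ → ℂ := fun x => (x : ℂ) ^ (a - 1)
  set w' : ℝ → ℂ := fun x => -(x : ℂ)
  have hg : Integrable g μ :=
    (by fun_prop : Continuous g).integrableOn_Ioc.mono_set Ioo_subset_Ioc_self
  have hw : AEStronglyMeasurable w μ := (by fun_prop : Continuous w).aestronglyMeasurable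
  have hw1 : ∀ᵐ φ ∂μ, ‖w φ‖ ≤ 1 := ae_of_all _ fun φ => by
    simp only [w, show 2 * π * I * φ = (2 * π * φ : ℝ) * I by push_cast; ring,
      norm_exp_ofReal_mul_I, le_refl]
  have hg' : Integrable g' ν :=
    ((intervalIntegrable_iff_integrableOn_Ioc_of_le zero_le_one).1
      (intervalIntegral.intervalIntegrable_cpow' (by simpa using ha))).mono_set
      Ioo_subset_Ioc_self
  have hw' : AEStronglyMeasurable w' ν := (by fun_prop : Continuous w').aestronglyMeasurable
  have hw'1 : ∀ᵐ x ∂ν, ‖w' x‖ ≤ 1 := (ae_restrict_mem measurableSet_Ioo).mono fun x hx => by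
    simp [w', abs_of_pos hx.1, hx.2.le]
  have hmoments : ∀ n : ℕ, ∫ φ, g φ * w φ ^ n ∂μ = C * ∫ x, g' x * w' x ^ n ∂ν := fun n => by
    rw [setIntegral_cexp_two_pi_I_mul_mul_pow n (ne_zero_of_re_pos (by simp; positivity)),
      setIntegral_cpow_mul_neg_pow ha]
  have hdisc : ∀ r : ℝ, |r| < 1 →
      ∫ φ, g φ * (1 + r * w φ) ^ z ∂μ = C * ∫ x, g' x * (1 + r * w' x) ^ z ∂ν := fun r hr => by
    have hr' : ‖(r : ℂ)‖ < 1 := by simpa using hr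
    refine (hasSum_integral_mul_one_add_mul_cpow hg hw hw1 z hr').unique ?_
    simpa only [hmoments, mul_left_comm C] using
      (hasSum_integral_mul_one_add_mul_cpow hg' hw' hw'1 z hr').mul_left C
  have hlim : ∫ φ, g φ * (1 + w φ) ^ z ∂μ = C * ∫ x, g' x * (1 + w' x) ^ z ∂ν := by
    refine tendsto_nhds_unique (tendsto_integral_mul_one_add_mul_cpow hg hw hw1 ?_ hz)
      (((tendsto_integral_mul_one_add_mul_cpow hg' hw' hw'1 ?_ hz).const_mul C).congr' ?_)
    · exact (ae_restrict_mem measurableSet_Ioo).mono fun φ hφ =>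
        one_add_cexp_two_pi_I_mul_mem_slitPlane hφ
    · refine (ae_restrict_mem measurableSet_Ioo).mono fun x hx => mem_slitPlane_iff.2 (Or.inl ?_)
      simp [w', hx.2]
    · filter_upwards [Ioo_mem_nhdsLT (show (-1 : ℝ) < 1 by norm_num)] with r hr
      exact (hdisc r (abs_lt.2 hr)).symm
  have hbeta : ∫ x, g' x * (1 + w' x) ^ z ∂ν = betaIntegral a (z + 1) := by
    rw [betaIntegral, intervalIntegral.integral_of_le zero_le_one, integral_Ioc_eq_integral_Ioo]
    simp [ν, g', w', sub_eq_add_neg]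
  have hΓa : Gamma a ≠ 0 := Gamma_ne_zero_of_re_pos ha
  have hΓaz : Gamma (a + z + 1) ≠ 0 := Gamma_ne_zero_of_re_pos (by simp; positivity)
  have hB : betaIntegral a (z + 1) = Gamma a * Gamma (z + 1) / Gamma (a + z + 1) := by
    rw [eq_div_iff hΓaz, Gamma_mul_Gamma_eq_betaIntegral ha (by simp; positivity), add_assoc,
      mul_comm]
  rw [intervalIntegral.integral_of_le (by norm_num), integral_Ioc_eq_integral_Ioo, hlim, hbeta,
    hC, ← inv_Gamma_mul_inv_Gamma_one_sub a, hB]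
  field_simp

/-- For `α, β ∈ ℂ` with `Re(β - α) > 0` and every `s ∈ ℂ`,
`∫_{-1/2}^{1/2} e^{-2πisφ} e^{2πiαφ} (1 + e^{2πiφ})^{β-α} dφ = Γ(β-α+1) · 𝚪_{α,β}(s)`,
i.e. the Fourier transform of `h_{α,β}` equals the balanced gamma product
`𝚪_{α,β}(s) = 1/(Γ(s-α+1)·Γ(-s+β+1))`. The power is the principal branch. -/
theorem fourier_transform_h (α β : ℂ) (h : 0 < (β - α).re) (s : ℂ) :
    (∫ φ in (-(1 : ℝ) / 2)..((1 : ℝ) / 2),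
        Complex.exp (-(2 * (π : ℂ) * Complex.I) * s * (φ : ℂ)) *
          (Complex.exp (2 * (π : ℂ) * Complex.I * α * (φ : ℂ)) *
            (1 + Complex.exp (2 * (π : ℂ) * Complex.I * (φ : ℂ))) ^ (β - α))) =
      Complex.Gamma (β - α + 1) *
        ((Complex.Gamma (s - α + 1))⁻¹ * (Complex.Gamma (-s + β + 1))⁻¹) := by
  have hf : Continuous fun φ : ℝ =>
      exp (2 * π * I * α * φ) * (1 + exp (2 * π * I * φ)) ^ (β - α) :=
    (by fun_prop : Continuous _).mul (continuous_one_add_cexp_two_pi_I_mul_cpow h)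
  have hLHS : Differentiable ℂ fun s : ℂ => ∫ φ in (-(1 : ℝ) / 2)..(1 / 2),
      exp (-(2 * π * I) * s * φ) *
        (exp (2 * π * I * α * φ) * (1 + exp (2 * π * I * φ)) ^ (β - α)) :=
    (differentiable_intervalIntegral_cexp_mul (hf.intervalIntegrable _ _)).comp (by fun_prop)
  have hRHS : Differentiable ℂ fun s =>
      Gamma (β - α + 1) * ((Gamma (s - α + 1))⁻¹ * (Gamma (-s + β + 1))⁻¹) :=
    ((differentiable_one_div_Gamma.comp (by fun_prop)).mul
      (differentiable_one_div_Gamma.comp (by fun_prop))).const_mul _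
  refine congrFun (hLHS.eq_of_eqOn_of_isOpen hRHS
    (isOpen_lt continuous_const (by fun_prop) : IsOpen {s | 0 < (α - s).re})
    (z₀ := α - 1) (by simp) fun s hs => ?_) s
  have hexp : ∀ φ : ℝ, exp (-(2 * π * I) * s * φ) *
      (exp (2 * π * I * α * φ) * (1 + exp (2 * π * I * φ)) ^ (β - α)) =
      exp (2 * π * I * (α - s) * φ) * (1 + exp (2 * π * I * φ)) ^ (β - α) := fun φ => by
    rw [← mul_assoc, ← exp_add]
    ring_nf
  simp only [hexp, integral_cexp_mul_one_add_cexp_cpow_of_re_pos hs h.le]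
  ring_nf
end

section
/- Let ψ : ℝ → ℂ be a Schwartz function, let t ∈ ℝ, q = e^{2πit}, and let r ≥ 0 be an integer. Then Σ_{l∈ℤ} l^r q^l ψ̂(l) = (2πi)^{−r} Σ_{l∈ℤ} ψ^{(r)}(l + t), where ψ̂(ξ) = ∫_ℝ e^{−2πixξ} ψ(x) dx is the Fourier transform and ψ^{(r)} is the r-th derivative; both series converge absolutely. (This is the identity FT Δ_{q,r} = Δ^{q,r} of tempered distributions, tested against ψ; the case r = 0, t = 0 is the Poisson summation formula.) -/
/-!
The `r`-th derivative `g = ψ^{(r)}` is again a Schwartz function, and differentiation becomes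
multiplication on the Fourier side: `ĝ(ξ) = (2πiξ)^r ψ̂(ξ)`. Poisson summation for `g` at `t` gives
`Σ g(l + t) = Σ ĝ(l) e^{2πilt} = (2πi)^r Σ l^r q^l ψ̂(l)`. Both series converge absolutely because
the restriction of a Schwartz function (here `ĝ` and a translate of `g`) to `ℤ` is summable.
-/

open Complex MeasureTheory FourierTransform SchwartzMap
open scoped Real

namespace SchwartzMap

variable {E : Type*} [NormedAddCommGroup E] [NormedSpace ℝ E]

theorem summable_norm_intCast (f : 𝓢(ℝ, E)) : Summable fun l : ℤ => ‖f l‖ :=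
  summable_of_isBigO (Real.summable_abs_int_rpow one_lt_two)
    ((f.isBigO_cocompact_rpow (-2)).comp_tendsto Int.tendsto_coe_cofinite).norm_left

theorem summable_norm_intCast_add (f : 𝓢(ℝ, E)) (t : ℝ) :
    Summable fun l : ℤ => ‖f (l + t)‖ := by
  simpa using (f.compSubConstCLM ℝ (-t)).summable_norm_intCast

theorem iterate_derivCLM_apply {𝕜 : Type*} [RCLike 𝕜] [NormedSpace 𝕜 E] (n : ℕ) (f : 𝓢(ℝ, E)) :
    ⇑((derivCLM 𝕜 E)^[n] f) = iteratedDeriv n f := by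
  induction n generalizing f with
  | zero => rfl
  | succ n ih => rw [Function.iterate_succ_apply, ih, iteratedDeriv_succ']; rfl

theorem fourier_iterate_derivCLM {F : Type*} [NormedAddCommGroup F] [NormedSpace ℂ F] (n : ℕ)
    (f : 𝓢(ℝ, F)) (ξ : ℝ) : 𝓕 ((derivCLM ℝ F)^[n] f) ξ = (2 * π * I * ξ) ^ n • 𝓕 f ξ := by
  rw [fourier_coe, fourier_coe, iterate_derivCLM_apply,
    Real.fourier_iteratedDeriv (N := ⊤) (f.smooth ⊤) (fun k _ => ?_) le_top]
  rw [← iterate_derivCLM_apply (𝕜 := ℝ)]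
  exact ((derivCLM ℝ F)^[k] f).integrable

end SchwartzMap

theorem Real.fourier_eq_integral_exp_mul (f : ℝ → ℂ) (w : ℝ) :
    𝓕 f w = ∫ v : ℝ, Complex.exp (-(2 * π * I) * v * w) * f v := by
  rw [Real.fourier_real_eq_integral_exp_smul]
  congr 1 with v
  rw [smul_eq_mul]
  congr 2
  push_cast
  ring

theorem exp_two_pi_I_mul_zpow_eq_fourier (t : ℝ) (l : ℤ) :
    exp (2 * π * I * t) ^ l = fourier l (t : UnitAddCircle) := by
  rw [fourier_coe_apply, ← exp_int_mul]
  congr 1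
  push_cast
  ring

/-- For a Schwartz function `ψ : ℝ → ℂ`, `t ∈ ℝ`, `q = e^{2πit}`, and an
integer `r ≥ 0`, both series below converge absolutely and
`Σ_{l∈ℤ} l^r q^l ψ̂(l) = (2πi)^{-r} Σ_{l∈ℤ} ψ^{(r)}(l + t)`, where
`ψ̂(ξ) = ∫ e^{-2πixξ} ψ(x) dx`. (This is `FT Δ_{q,r} = Δ^{q,r}` tested against `ψ`; the case
`r = 0`, `t = 0` is the Poisson summation formula.) -/
theorem replication_fourier_identity (ψ : SchwartzMap ℝ ℂ) (t : ℝ) (q : ℂ)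
    (hq : q = Complex.exp (2 * (π : ℂ) * Complex.I * (t : ℂ))) (r : ℕ) :
    Summable (fun l : ℤ => ‖((l : ℂ) ^ r * q ^ l *
      ∫ x : ℝ, Complex.exp (-(2 * (π : ℂ) * Complex.I) * (x : ℂ) * (l : ℂ)) * ψ x)‖) ∧
    Summable (fun l : ℤ => ‖iteratedDeriv r (fun x : ℝ => ψ x) ((l : ℝ) + t)‖) ∧
    (∑' l : ℤ, (l : ℂ) ^ r * q ^ l *
        ∫ x : ℝ, Complex.exp (-(2 * (π : ℂ) * Complex.I) * (x : ℂ) * (l : ℂ)) * ψ x) =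
      ((2 * (π : ℂ) * Complex.I) ^ r)⁻¹ *
        ∑' l : ℤ, iteratedDeriv r (fun x : ℝ => ψ x) ((l : ℝ) + t) := by
  set g := (derivCLM ℝ ℂ)^[r] ψ
  have hg : ⇑g = iteratedDeriv r ψ := iterate_derivCLM_apply r ψ
  have hterm (l : ℤ) : (l : ℂ) ^ r * q ^ l * ∫ x : ℝ, exp (-(2 * π * I) * x * l) * ψ x =
      ((2 * π * I) ^ r)⁻¹ * (𝓕 g l * fourier l (t : UnitAddCircle)) := by
    rw [hq, exp_two_pi_I_mul_zpow_eq_fourier, ← ofReal_intCast, ← Real.fourier_eq_integral_exp_mul,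
      fourier_iterate_derivCLM, smul_eq_mul, fourier_coe]
    field_simp
    ring
  refine ⟨?_, ?_, ?_⟩
  · simp_rw [hterm, norm_mul, fourier_apply, Circle.norm_coe, mul_one]
    exact (𝓕 g).summable_norm_intCast.mul_left _
  · simpa [hg] using g.summable_norm_intCast_add t
  · simp_rw [hterm, tsum_mul_left, ← SchwartzMap.tsum_eq_tsum_fourier, hg, add_comm]
end
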